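/- arXiv:2203.16188 — 10 statements merged into one kernel-verified Lean document; each statement's English description precedes it below -/
import Mathlib

section
/- For every solution (S,V,E,I,Q,H,R) of the SVEIQHR model whose initial value (S(0),V(0),E(0),I(0),Q(0),H(0),R(0)) lies in [0,∞)⁷, one has (S(t),V(t),E(t),I(t),Q(t),H(t),R(t)) ∈ [0,∞)⁷ for every t ≥ 0. -/
/-!
The SVEIQHR vector field is quasi-positive: on the boundary face `xᵢ = 0` of the orthant every
remaining term of `xᵢ'` is a nonnegative combination of the other coordinates. Quantitatively, on
a bounded set, a point with all coordinates `≥ -η` and `xᵢ = -η` has `xᵢ' ≥ -K η`. Hence, for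
`ε > 0`, the perturbed coordinates `xᵢ(t) + ε e^{(K+1)t}` start positive and have positive
derivative whenever one of them reaches zero while the others are nonnegative, so they never
become negative; letting `ε → 0` gives `x(t) ≥ 0`.
-/

open Topology Set

lemma HasDerivAt.eventually_nonneg_nhdsGT {g : ℝ → ℝ} {g' s : ℝ} (hg : HasDerivAt g g' s)
    (hs : 0 ≤ g s) (hzero : g s = 0 → 0 < g') : ∀ᶠ u in 𝓝[>] s, 0 ≤ g u := by
  rcases hs.lt_or_eq with hpos | hzero'
  · exact nhdsWithin_le_nhds <| (hg.continuousAt.eventually (lt_mem_nhds hpos)).mono fun _ h => h.le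
  · have hsign := eventually_nhdsWithin_sign_eq_of_deriv_pos
      (hg.deriv ▸ hzero hzero'.symm) hzero'.symm
    filter_upwards [nhdsWithin_le_nhds hsign, self_mem_nhdsWithin] with u hu (hsu : s < u)
    rw [sign_pos (sub_pos.2 hsu), sign_eq_one_iff] at hu
    exact hu.le

section QuasiPositive

variable {ι : Type*} [Fintype ι]

/-- This is what quasi-positivity (`Fᵢ p ≥ 0` whenever `p ≥ 0` and `pᵢ = 0`) together with local
Lipschitz continuity gives: compare `F p` with `F p⁺`, where `‖p - p⁺‖ ≤ η`. -/
def LinearlyQuasiPositive (F : (ι → ℝ) → ι → ℝ) : Prop :=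
  ∀ M, ∃ K, ∀ p : ι → ℝ, ‖p‖ ≤ M → ∀ η > 0, (∀ j, -η ≤ p j) →
    ∀ i, p i = -η → -(K * η) ≤ F p i

lemma nonneg_add_mul_exp_of_hasDerivAt {x x' : ℝ → ι → ℝ} {T K ε : ℝ}
    (hx : ∀ t ∈ Icc 0 T, HasDerivAt x (x' t) t) (h0 : 0 ≤ x 0) (hε : 0 < ε)
    (hx' : ∀ t ∈ Icc 0 T, ∀ η > 0, (∀ j, -η ≤ x t j) → ∀ i, x t i = -η → -(K * η) ≤ x' t i) :
    ∀ t ∈ Icc 0 T, ∀ i, 0 ≤ x t i + ε * Real.exp ((K + 1) * t) := by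
  set s := {t | ∀ i, 0 ≤ x t i + ε * Real.exp ((K + 1) * t)}
  have hexp : ∀ t, HasDerivAt (fun t => ε * Real.exp ((K + 1) * t))
      (ε * Real.exp ((K + 1) * t) * (K + 1)) t := fun t => by
    simpa [mul_assoc] using (((hasDerivAt_id t).const_mul (K + 1)).exp).const_mul ε
  have hy : ∀ t ∈ Icc 0 T, ∀ i, HasDerivAt (fun t => x t i + ε * Real.exp ((K + 1) * t))
      (x' t i + ε * Real.exp ((K + 1) * t) * (K + 1)) t := fun t ht i =>
    ((hasDerivAt_pi.1 (hx t ht)) i).add (hexp t)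
  have hclosed : IsClosed (s ∩ Icc 0 T) := by
    rw [inter_comm]
    exact ContinuousOn.preimage_isClosed_of_isClosed (t := Ici 0)
      (continuousOn_pi.2 fun i t ht => (hy t ht i).continuousAt.continuousWithinAt)
      isClosed_Icc isClosed_Ici
  refine fun t ht => hclosed.Icc_subset_of_forall_mem_nhdsWithin ?_ ?_ ht
  · intro i
    simpa using add_nonneg (h0 i) hε.le
  · rintro u ⟨hu, hu0, huT⟩
    refine Filter.eventually_all.2 fun i =>
      (hy u ⟨hu0, huT.le⟩ i).eventually_nonneg_nhdsGT (hu i) fun hzero => ?_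
    set η := ε * Real.exp ((K + 1) * u)
    have hη : 0 < η := by positivity
    have := hx' u ⟨hu0, huT.le⟩ η hη (fun j => by linarith [hu j]) i (by linarith)
    linarith

theorem nonneg_of_hasDerivAt_of_linearlyQuasiPositive {F : (ι → ℝ) → ι → ℝ}
    (hF : LinearlyQuasiPositive F) {x : ℝ → ι → ℝ} (hx : ∀ t ≥ 0, HasDerivAt x (F (x t)) t)
    (h0 : 0 ≤ x 0) {T : ℝ} (hT : 0 ≤ T) : 0 ≤ x T := by
  obtain ⟨M, hM⟩ := isCompact_Icc.exists_bound_of_continuousOn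
    (fun t (ht : t ∈ Icc 0 T) => (hx t ht.1).continuousAt.continuousWithinAt)
  obtain ⟨K, hK⟩ := hF M
  have hperturbed := fun ε (hε : 0 < ε) => nonneg_add_mul_exp_of_hasDerivAt
    (x' := fun t => F (x t)) (fun t ht => hx t ht.1) h0 hε (fun t ht => hK (x t) (hM t ht))
  refine fun i => le_of_forall_pos_le_add fun δ hδ => ?_
  have := hperturbed (δ / Real.exp ((K + 1) * T)) (by positivity) T ⟨hT, le_rfl⟩ i
  rwa [div_mul_cancel₀ _ (Real.exp_pos _).ne'] at this

end QuasiPositive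

lemma neg_mul_le_mul_of_abs_le {a b η M : ℝ} (hη : 0 ≤ η) (ha : -η ≤ a) (hb : -η ≤ b)
    (haM : |a| ≤ M) (hbM : |b| ≤ M) : -(η * M) ≤ a * b := by
  rcases le_or_gt 0 a with ha0 | ha0
  · nlinarith [le_abs_self a, neg_abs_le b]
  · nlinarith [le_abs_self b, abs_nonneg a]

section SVEIQHR

variable (lam lam' mu mu' beta alpha theta gamma phi kappa tau delta u1 u2 u3 u4 u5 : ℝ)

-- The coordinates `p 0, …, p 6` are `S, V, E, I, Q, H, R`.
def sveiqhrField (p : Fin 7 → ℝ) : Fin 7 → ℝ :=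
  ![lam + alpha * p 6 - (1 - u2) * beta * p 0 * p 3 - u1 * p 0 - mu * p 0,
    u1 * p 0 - (1 - delta) * beta * p 1 * p 3 - mu * p 1,
    (1 - u2) * beta * p 0 * p 3 + (1 - delta) * beta * p 1 * p 3 - (theta + u3 + mu) * p 2,
    theta * p 2 - (gamma + u4 + u5 + mu + mu') * p 3,
    lam' + u3 * p 2 + u4 * p 3 - (kappa + tau + mu) * p 4,
    tau * p 4 + u5 * p 3 - (phi + mu + mu') * p 5,
    gamma * p 3 + kappa * p 4 + phi * p 5 - (alpha + mu) * p 6]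

variable {lam lam' mu mu' beta alpha theta gamma phi kappa tau delta u1 u2 u3 u4 u5}

lemma sveiqhrField_linearlyQuasiPositive (hlam : 0 ≤ lam) (hlam' : 0 ≤ lam') (hbeta : 0 ≤ beta)
    (halpha : 0 ≤ alpha) (htheta : 0 ≤ theta) (hgamma : 0 ≤ gamma) (hphi : 0 ≤ phi)
    (hkappa : 0 ≤ kappa) (htau : 0 ≤ tau) (hdelta : delta ∈ Icc (0 : ℝ) 1) (hu1 : 0 ≤ u1)
    (hu2 : u2 ∈ Icc (0 : ℝ) 1) (hu3 : 0 ≤ u3) (hu4 : 0 ≤ u4) (hu5 : 0 ≤ u5) :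
    LinearlyQuasiPositive
      (sveiqhrField lam lam' mu mu' beta alpha theta gamma phi kappa tau delta u1 u2 u3 u4 u5) := by
  intro M
  -- Each coupling coefficient pays for its gain term, each bilinear term costs `β M`, and the
  -- decay terms cost at most `|μ| + |μ'|`.
  refine ⟨alpha + theta + tau + gamma + kappa + phi + u3 + u4 + u5 + u1 + 2 * beta * M
    + |mu| + |mu'|, fun p hp η hη hlow i hi => ?_⟩
  have hM : ∀ j, |p j| ≤ M := fun j => (Real.norm_eq_abs (p j) ▸ norm_le_pi_norm p j).trans hp
  have hM0 : 0 ≤ M := (abs_nonneg _).trans (hM 0)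
  have hIM : -M ≤ p 3 := (neg_le_neg (hM 3)).trans (neg_abs_le _)
  have hβ₁ : 0 ≤ (1 - u2) * beta := mul_nonneg (by linarith [hu2.2]) hbeta
  have hβ₂ : 0 ≤ (1 - delta) * beta := mul_nonneg (by linarith [hdelta.2]) hbeta
  have hSI := mul_le_mul_of_nonneg_left
    (neg_mul_le_mul_of_abs_le hη.le (hlow 0) (hlow 3) (hM 0) (hM 3)) hβ₁
  have hVI := mul_le_mul_of_nonneg_left
    (neg_mul_le_mul_of_abs_le hη.le (hlow 1) (hlow 3) (hM 1) (hM 3)) hβ₂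
  have hIβ₁ := mul_le_mul_of_nonneg_left hIM (mul_nonneg hβ₁ hη.le)
  have hIβ₂ := mul_le_mul_of_nonneg_left hIM (mul_nonneg hβ₂ hη.le)
  have hu2βη : 0 ≤ u2 * beta * η * M := by have := hu2.1; positivity
  have hδβη : 0 ≤ delta * beta * η * M := by have := hdelta.1; positivity
  fin_cases i <;> simp only [sveiqhrField] <;>
    simp only [Fin.zero_eta, Fin.mk_one, Fin.reduceFinMk, Matrix.cons_val, Fin.isValue] at hi ⊢ <;>
    rw [hi] <;>
    linarith [mul_le_mul_of_nonneg_left (hlow 6) halpha, mul_le_mul_of_nonneg_left (hlow 0) hu1,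
      mul_le_mul_of_nonneg_left (hlow 2) htheta, mul_le_mul_of_nonneg_left (hlow 2) hu3,
      mul_le_mul_of_nonneg_left (hlow 3) hu4, mul_le_mul_of_nonneg_left (hlow 4) htau,
      mul_le_mul_of_nonneg_left (hlow 3) hu5, mul_le_mul_of_nonneg_left (hlow 3) hgamma,
      mul_le_mul_of_nonneg_left (hlow 4) hkappa, mul_le_mul_of_nonneg_left (hlow 5) hphi,
      mul_le_mul_of_nonneg_left (neg_abs_le mu) hη.le,
      mul_le_mul_of_nonneg_left (neg_abs_le mu') hη.le,
      mul_nonneg halpha hη.le, mul_nonneg htheta hη.le, mul_nonneg htau hη.le,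
      mul_nonneg hgamma hη.le, mul_nonneg hkappa hη.le, mul_nonneg hphi hη.le,
      mul_nonneg hu1 hη.le, mul_nonneg hu3 hη.le, mul_nonneg hu4 hη.le, mul_nonneg hu5 hη.le,
      mul_nonneg (abs_nonneg mu) hη.le, mul_nonneg (abs_nonneg mu') hη.le,
      mul_nonneg (mul_nonneg hbeta hη.le) hM0]

end SVEIQHR

theorem stmt0_general
    (lam lam' mu mu' beta alpha theta gamma phi kappa tau : ℝ)
    (delta u1 u2 u3 u4 u5 : ℝ)
    (hlam : 0 < lam) (hlam' : 0 < lam')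
    (hbeta : 0 < beta) (halpha : 0 < alpha) (htheta : 0 < theta)
    (hgamma : 0 < gamma) (hphi : 0 < phi) (hkappa : 0 < kappa) (htau : 0 < tau)
    (hdelta : delta ∈ Set.Icc (0:ℝ) 1) (hu1 : u1 ∈ Set.Icc (0:ℝ) 1)
    (hu2 : u2 ∈ Set.Icc (0:ℝ) 1) (hu3 : u3 ∈ Set.Icc (0:ℝ) 1)
    (hu4 : u4 ∈ Set.Icc (0:ℝ) 1) (hu5 : u5 ∈ Set.Icc (0:ℝ) 1)
    (S V E I Q H R : ℝ → ℝ)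
    (hS : ∀ t ≥ (0:ℝ), HasDerivAt S (lam + alpha * R t - (1 - u2) * beta * S t * I t - u1 * S t - mu * S t) t)
    (hV : ∀ t ≥ (0:ℝ), HasDerivAt V (u1 * S t - (1 - delta) * beta * V t * I t - mu * V t) t)
    (hE : ∀ t ≥ (0:ℝ), HasDerivAt E ((1 - u2) * beta * S t * I t + (1 - delta) * beta * V t * I t - (theta + u3 + mu) * E t) t)
    (hI : ∀ t ≥ (0:ℝ), HasDerivAt I (theta * E t - (gamma + u4 + u5 + mu + mu') * I t) t)
    (hQ : ∀ t ≥ (0:ℝ), HasDerivAt Q (lam' + u3 * E t + u4 * I t - (kappa + tau + mu) * Q t) t)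
    (hH : ∀ t ≥ (0:ℝ), HasDerivAt H (tau * Q t + u5 * I t - (phi + mu + mu') * H t) t)
    (hR : ∀ t ≥ (0:ℝ), HasDerivAt R (gamma * I t + kappa * Q t + phi * H t - (alpha + mu) * R t) t)
    (hinit : 0 ≤ S 0 ∧ 0 ≤ V 0 ∧ 0 ≤ E 0 ∧ 0 ≤ I 0 ∧ 0 ≤ Q 0 ∧ 0 ≤ H 0 ∧ 0 ≤ R 0) :
    ∀ t ≥ (0:ℝ), 0 ≤ S t ∧ 0 ≤ V t ∧ 0 ≤ E t ∧ 0 ≤ I t ∧ 0 ≤ Q t ∧ 0 ≤ H t ∧ 0 ≤ R t := by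
  set x : ℝ → Fin 7 → ℝ := fun t => ![S t, V t, E t, I t, Q t, H t, R t]
  have hx : ∀ t ≥ 0, HasDerivAt x (sveiqhrField lam lam' mu mu' beta alpha theta gamma phi kappa
      tau delta u1 u2 u3 u4 u5 (x t)) t := fun t ht => by
    rw [hasDerivAt_pi]
    intro i
    fin_cases i
    · exact hS t ht
    · exact hV t ht
    · exact hE t ht
    · exact hI t ht
    · exact hQ t ht
    · exact hH t ht
    · exact hR t ht
  have hF := sveiqhrField_linearlyQuasiPositive (mu := mu) (mu' := mu') hlam.le hlam'.le hbeta.le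
    halpha.le htheta.le hgamma.le hphi.le hkappa.le htau.le hdelta hu1.1 hu2 hu3.1 hu4.1 hu5.1
  obtain ⟨hS0, hV0, hE0, hI0, hQ0, hH0, hR0⟩ := hinit
  have h0 : 0 ≤ x 0 := by
    intro i; fin_cases i <;> assumption
  intro t ht
  have hxt := nonneg_of_hasDerivAt_of_linearlyQuasiPositive hF hx h0 ht
  exact ⟨hxt 0, hxt 1, hxt 2, hxt 3, hxt 4, hxt 5, hxt 6⟩

theorem stmt0
    (lam lam' mu mu' beta alpha theta gamma phi kappa tau : ℝ)
    (delta u1 u2 u3 u4 u5 : ℝ)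
    (hlam : 0 < lam) (hlam' : 0 < lam') (hmu : 0 < mu) (hmu' : 0 < mu')
    (hbeta : 0 < beta) (halpha : 0 < alpha) (htheta : 0 < theta)
    (hgamma : 0 < gamma) (hphi : 0 < phi) (hkappa : 0 < kappa) (htau : 0 < tau)
    (hdelta : delta ∈ Set.Icc (0:ℝ) 1) (hu1 : u1 ∈ Set.Icc (0:ℝ) 1)
    (hu2 : u2 ∈ Set.Icc (0:ℝ) 1) (hu3 : u3 ∈ Set.Icc (0:ℝ) 1)
    (hu4 : u4 ∈ Set.Icc (0:ℝ) 1) (hu5 : u5 ∈ Set.Icc (0:ℝ) 1)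
    (S V E I Q H R : ℝ → ℝ)
    (hS : ∀ t ≥ (0:ℝ), HasDerivAt S (lam + alpha * R t - (1 - u2) * beta * S t * I t - u1 * S t - mu * S t) t)
    (hV : ∀ t ≥ (0:ℝ), HasDerivAt V (u1 * S t - (1 - delta) * beta * V t * I t - mu * V t) t)
    (hE : ∀ t ≥ (0:ℝ), HasDerivAt E ((1 - u2) * beta * S t * I t + (1 - delta) * beta * V t * I t - (theta + u3 + mu) * E t) t)
    (hI : ∀ t ≥ (0:ℝ), HasDerivAt I (theta * E t - (gamma + u4 + u5 + mu + mu') * I t) t)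
    (hQ : ∀ t ≥ (0:ℝ), HasDerivAt Q (lam' + u3 * E t + u4 * I t - (kappa + tau + mu) * Q t) t)
    (hH : ∀ t ≥ (0:ℝ), HasDerivAt H (tau * Q t + u5 * I t - (phi + mu + mu') * H t) t)
    (hR : ∀ t ≥ (0:ℝ), HasDerivAt R (gamma * I t + kappa * Q t + phi * H t - (alpha + mu) * R t) t)
    (hinit : 0 ≤ S 0 ∧ 0 ≤ V 0 ∧ 0 ≤ E 0 ∧ 0 ≤ I 0 ∧ 0 ≤ Q 0 ∧ 0 ≤ H 0 ∧ 0 ≤ R 0) :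
    ∀ t ≥ (0:ℝ), 0 ≤ S t ∧ 0 ≤ V t ∧ 0 ≤ E t ∧ 0 ≤ I t ∧ 0 ≤ Q t ∧ 0 ≤ H t ∧ 0 ≤ R t :=
  stmt0_general lam lam' mu mu' beta alpha theta gamma phi kappa tau delta u1 u2 u3 u4 u5 hlam hlam'
    hbeta halpha htheta hgamma hphi hkappa htau hdelta hu1 hu2 hu3 hu4 hu5 S V E I Q H R hS hV hE hI
    hQ hH hR hinit
end

section
/- Let (S,V,E,I,Q,H,R) be a solution of the SVEIQHR model with values in [0,∞)⁷, and set N(t) = S(t)+V(t)+E(t)+I(t)+Q(t)+H(t)+R(t). Then N is a bounded function of t ≥ 0, and limsup_{t→∞} N(t) ≤ (λ+λ')/μ. -/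
/-!
Summing the seven equations, all transmission and transfer terms cancel and the total population
satisfies `N' = λ + λ' - μ N - μ' (I + H) ≤ (λ + λ') - μ N`, since `I, H ≥ 0`. Grönwall's inequality
then gives `N t ≤ (λ + λ')/μ + (N 0 - (λ + λ')/μ) e^{-μ t}`, which together with `N ≥ 0` yields
both boundedness and the bound on the limsup.
-/

open Real Filter Polynomial Matrix

theorem le_div_add_mul_exp_of_deriv_le_sub_mul {f f' : ℝ → ℝ} {c μ : ℝ} (hμ : μ ≠ 0)
    (hf : ∀ t ≥ 0, HasDerivAt f (f' t) t) (bound : ∀ t ≥ 0, f' t ≤ c - μ * f t) :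
    ∀ t ≥ 0, f t ≤ c / μ + (f 0 - c / μ) * exp (-(μ * t)) := by
  intro t ht
  have hgronwall := le_gronwallBound_of_liminf_deriv_right_le (f := f) (f' := f') (δ := f 0)
    (K := -μ) (ε := c) (a := 0) (b := t)
    (fun x hx => (hf x hx.1).continuousAt.continuousWithinAt)
    (fun x hx _ hr => (hf x hx.1).hasDerivWithinAt.liminf_right_slope_le hr) le_rfl
    (fun x hx => by linarith [bound x hx.1]) t ⟨ht, le_rfl⟩
  rw [gronwallBound_of_K_ne_0 (neg_ne_zero.mpr hμ), sub_zero] at hgronwall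
  convert hgronwall using 1
  field_simp
  ring

theorem exists_abs_le_of_le_add_mul_exp {f : ℝ → ℝ} {A B μ : ℝ} (hμ : 0 ≤ μ)
    (hf₀ : ∀ t ≥ 0, 0 ≤ f t) (hf : ∀ t ≥ 0, f t ≤ A + B * exp (-(μ * t))) :
    ∃ C : ℝ, ∀ t ≥ 0, |f t| ≤ C := by
  refine ⟨A + |B|, fun t ht => ?_⟩
  have hexp : exp (-(μ * t)) ≤ 1 := exp_le_one_iff.mpr (by nlinarith)
  calc |f t| = f t := abs_of_nonneg (hf₀ t ht)
    _ ≤ A + B * exp (-(μ * t)) := hf t ht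
    _ ≤ A + |B| * 1 := by
        gcongr A + ?_
        exact mul_le_mul (le_abs_self B) hexp (exp_pos _).le (abs_nonneg B)
    _ = A + |B| := by rw [mul_one]

theorem limsup_le_of_le_add_mul_exp {f : ℝ → ℝ} {A B μ : ℝ} (hμ : 0 < μ)
    (hf₀ : ∀ t ≥ 0, 0 ≤ f t) (hf : ∀ t ≥ 0, f t ≤ A + B * exp (-(μ * t))) :
    limsup f atTop ≤ A := by
  have hlim : Tendsto (fun t => A + B * exp (-(μ * t))) atTop (nhds A) := by
    have hexp := tendsto_exp_neg_atTop_nhds_zero.comp (tendsto_id.const_mul_atTop hμ)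
    simpa using tendsto_const_nhds.add (hexp.const_mul B)
  have hcobdd : IsCoboundedUnder (· ≤ ·) atTop f :=
    isBoundedUnder_of_eventually_ge (eventually_ge_atTop 0 |>.mono hf₀) |>.isCoboundedUnder_le
  calc limsup f atTop ≤ limsup (fun t => A + B * exp (-(μ * t))) atTop :=
        limsup_le_limsup (eventually_ge_atTop 0 |>.mono hf) hcobdd hlim.isBoundedUnder_le
    _ = A := hlim.limsup_eq

theorem hasDerivAt_total_population
    {lam lam' mu mu' beta alpha theta gamma phi kappa tau delta u1 u2 u3 u4 u5 t : ℝ}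
    {S V E I Q H R : ℝ → ℝ}
    (hS : HasDerivAt S (lam + alpha * R t - (1 - u2) * beta * S t * I t - u1 * S t - mu * S t) t)
    (hV : HasDerivAt V (u1 * S t - (1 - delta) * beta * V t * I t - mu * V t) t)
    (hE : HasDerivAt E ((1 - u2) * beta * S t * I t + (1 - delta) * beta * V t * I t -
      (theta + u3 + mu) * E t) t)
    (hI : HasDerivAt I (theta * E t - (gamma + u4 + u5 + mu + mu') * I t) t)
    (hQ : HasDerivAt Q (lam' + u3 * E t + u4 * I t - (kappa + tau + mu) * Q t) t)
    (hH : HasDerivAt H (tau * Q t + u5 * I t - (phi + mu + mu') * H t) t)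
    (hR : HasDerivAt R (gamma * I t + kappa * Q t + phi * H t - (alpha + mu) * R t) t) :
    HasDerivAt (fun t => S t + V t + E t + I t + Q t + H t + R t)
      (lam + lam' - mu * (S t + V t + E t + I t + Q t + H t + R t) - mu' * (I t + H t)) t :=
  (hS.add hV |>.add hE |>.add hI |>.add hQ |>.add hH |>.add hR).congr_deriv (by ring)

theorem stmt3_general
    (lam lam' mu mu' beta alpha theta gamma phi kappa tau : ℝ)
    (delta u1 u2 u3 u4 u5 : ℝ)
    (hmu : 0 < mu) (hmu' : 0 < mu')
    (S V E I Q H R : ℝ → ℝ)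
    (hS : ∀ t ≥ (0:ℝ), HasDerivAt S (lam + alpha * R t - (1 - u2) * beta * S t * I t - u1 * S t - mu * S t) t)
    (hV : ∀ t ≥ (0:ℝ), HasDerivAt V (u1 * S t - (1 - delta) * beta * V t * I t - mu * V t) t)
    (hE : ∀ t ≥ (0:ℝ), HasDerivAt E ((1 - u2) * beta * S t * I t + (1 - delta) * beta * V t * I t - (theta + u3 + mu) * E t) t)
    (hI : ∀ t ≥ (0:ℝ), HasDerivAt I (theta * E t - (gamma + u4 + u5 + mu + mu') * I t) t)
    (hQ : ∀ t ≥ (0:ℝ), HasDerivAt Q (lam' + u3 * E t + u4 * I t - (kappa + tau + mu) * Q t) t)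
    (hH : ∀ t ≥ (0:ℝ), HasDerivAt H (tau * Q t + u5 * I t - (phi + mu + mu') * H t) t)
    (hR : ∀ t ≥ (0:ℝ), HasDerivAt R (gamma * I t + kappa * Q t + phi * H t - (alpha + mu) * R t) t)
    (hpos : ∀ t ≥ (0:ℝ), 0 ≤ S t ∧ 0 ≤ V t ∧ 0 ≤ E t ∧ 0 ≤ I t ∧ 0 ≤ Q t ∧ 0 ≤ H t ∧ 0 ≤ R t) :
    (∃ C : ℝ, ∀ t ≥ (0:ℝ), |S t + V t + E t + I t + Q t + H t + R t| ≤ C) ∧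
      Filter.limsup (fun t => S t + V t + E t + I t + Q t + H t + R t) Filter.atTop
        ≤ (lam + lam') / mu := by
  set N := fun t => S t + V t + E t + I t + Q t + H t + R t
  have hN₀ : ∀ t ≥ (0:ℝ), 0 ≤ N t := fun t ht => by
    obtain ⟨hS₀, hV₀, hE₀, hI₀, hQ₀, hH₀, hR₀⟩ := hpos t ht
    positivity
  have hN' : ∀ t ≥ (0:ℝ), HasDerivAt N
      (lam + lam' - mu * N t - mu' * (I t + H t)) t := fun t ht =>
    hasDerivAt_total_population (hS t ht) (hV t ht) (hE t ht) (hI t ht) (hQ t ht) (hH t ht)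
      (hR t ht)
  have hIH : ∀ t ≥ (0:ℝ), 0 ≤ mu' * (I t + H t) := fun t ht =>
    mul_nonneg hmu'.le (add_nonneg (hpos t ht).2.2.2.1 (hpos t ht).2.2.2.2.2.1)
  have hN := le_div_add_mul_exp_of_deriv_le_sub_mul hmu.ne' hN'
    (fun t ht => sub_le_self _ (hIH t ht))
  exact ⟨exists_abs_le_of_le_add_mul_exp hmu.le hN₀ hN, limsup_le_of_le_add_mul_exp hmu hN₀ hN⟩

theorem stmt3
    (lam lam' mu mu' beta alpha theta gamma phi kappa tau : ℝ)
    (delta u1 u2 u3 u4 u5 : ℝ)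
    (hlam : 0 < lam) (hlam' : 0 < lam') (hmu : 0 < mu) (hmu' : 0 < mu')
    (hbeta : 0 < beta) (halpha : 0 < alpha) (htheta : 0 < theta)
    (hgamma : 0 < gamma) (hphi : 0 < phi) (hkappa : 0 < kappa) (htau : 0 < tau)
    (hdelta : delta ∈ Set.Icc (0:ℝ) 1) (hu1 : u1 ∈ Set.Icc (0:ℝ) 1)
    (hu2 : u2 ∈ Set.Icc (0:ℝ) 1) (hu3 : u3 ∈ Set.Icc (0:ℝ) 1)
    (hu4 : u4 ∈ Set.Icc (0:ℝ) 1) (hu5 : u5 ∈ Set.Icc (0:ℝ) 1)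
    (S V E I Q H R : ℝ → ℝ)
    (hS : ∀ t ≥ (0:ℝ), HasDerivAt S (lam + alpha * R t - (1 - u2) * beta * S t * I t - u1 * S t - mu * S t) t)
    (hV : ∀ t ≥ (0:ℝ), HasDerivAt V (u1 * S t - (1 - delta) * beta * V t * I t - mu * V t) t)
    (hE : ∀ t ≥ (0:ℝ), HasDerivAt E ((1 - u2) * beta * S t * I t + (1 - delta) * beta * V t * I t - (theta + u3 + mu) * E t) t)
    (hI : ∀ t ≥ (0:ℝ), HasDerivAt I (theta * E t - (gamma + u4 + u5 + mu + mu') * I t) t)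
    (hQ : ∀ t ≥ (0:ℝ), HasDerivAt Q (lam' + u3 * E t + u4 * I t - (kappa + tau + mu) * Q t) t)
    (hH : ∀ t ≥ (0:ℝ), HasDerivAt H (tau * Q t + u5 * I t - (phi + mu + mu') * H t) t)
    (hR : ∀ t ≥ (0:ℝ), HasDerivAt R (gamma * I t + kappa * Q t + phi * H t - (alpha + mu) * R t) t)
    (hpos : ∀ t ≥ (0:ℝ), 0 ≤ S t ∧ 0 ≤ V t ∧ 0 ≤ E t ∧ 0 ≤ I t ∧ 0 ≤ Q t ∧ 0 ≤ H t ∧ 0 ≤ R t) :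
    (∃ C : ℝ, ∀ t ≥ (0:ℝ), |S t + V t + E t + I t + Q t + H t + R t| ≤ C) ∧
      Filter.limsup (fun t => S t + V t + E t + I t + Q t + H t + R t) Filter.atTop
        ≤ (lam + lam') / mu :=
  stmt3_general lam lam' mu mu' beta alpha theta gamma phi kappa tau delta u1 u2 u3 u4 u5 hmu hmu' S
    V E I Q H R hS hV hE hI hQ hH hR hpos
end

section
/- A point (S,V,E,I,Q,H,R) ∈ ℝ⁷ with I = 0 is an equilibrium of the SVEIQHR model if and only if S = k₆, V = u₁k₆/μ, E = 0, Q = λ'/k₃, H = τλ'/(k₃k₄), and R = λ'(κk₄+φτ)/(k₃k₄k₅). Moreover k₆, u₁k₆/μ (when u₁ > 0), λ'/k₃, τλ'/(k₃k₄), and λ'(κk₄+φτ)/(k₃k₄k₅) are all positive; in particular the model has exactly one disease-free equilibrium. -/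
/-!
With `I = 0` the equilibrium equations of the SVEIQHR model become a triangular linear system:
`θE = 0` forces `E = 0`, after which `Q`, `H`, `R`, `S`, `V` are each fixed, in this order, by one
equation `c x = (terms already known)` with `c ≠ 0`. The closed forms solve this cascade, and
cancelling the pivots `c` shows that nothing else does; their positivity is then immediate.
-/

section DiseaseFree

variable {lam lam' mu mu' beta alpha theta gamma phi kappa tau delta u1 u2 u3 u4 u5 : ℝ}
  {k3 k4 k5 k6 : ℝ}

theorem cascade_iff_closed_form {S V E Q H R : ℝ}
    (hk3 : k3 ≠ 0) (hk4 : k4 ≠ 0) (hk5 : k5 ≠ 0) (hu1mu : u1 + mu ≠ 0) (hmu : mu ≠ 0)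
    (hk6 : k6 = lam / (u1 + mu) + alpha * lam' * kappa / ((u1 + mu) * k3 * k5)
      + alpha * lam' * phi * tau / ((u1 + mu) * k3 * k4 * k5)) :
    (E = 0 ∧ k3 * Q = lam' ∧ k4 * H = tau * Q ∧ k5 * R = kappa * Q + phi * H ∧
      (u1 + mu) * S = lam + alpha * R ∧ mu * V = u1 * S) ↔
    (S = k6 ∧ V = u1 * k6 / mu ∧ E = 0 ∧ Q = lam' / k3 ∧ H = tau * lam' / (k3 * k4) ∧
      R = lam' * (kappa * k4 + phi * tau) / (k3 * k4 * k5)) := by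
  have solution : k3 * (lam' / k3) = lam' ∧
      k4 * (tau * lam' / (k3 * k4)) = tau * (lam' / k3) ∧
      k5 * (lam' * (kappa * k4 + phi * tau) / (k3 * k4 * k5)) =
        kappa * (lam' / k3) + phi * (tau * lam' / (k3 * k4)) ∧
      (u1 + mu) * k6 = lam + alpha * (lam' * (kappa * k4 + phi * tau) / (k3 * k4 * k5)) ∧
      mu * (u1 * k6 / mu) = u1 * k6 := by
    refine ⟨by field_simp, by field_simp, by field_simp, ?_, by field_simp⟩
    rw [hk6]
    field_simp
    ring
  obtain ⟨hQ₀, hH₀, hR₀, hS₀, hV₀⟩ := solution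
  constructor
  · rintro ⟨rfl, hQ, hH, hR, hS, hV⟩
    obtain rfl := mul_left_cancel₀ hk3 (hQ.trans hQ₀.symm)
    obtain rfl := mul_left_cancel₀ hk4 (hH.trans hH₀.symm)
    obtain rfl := mul_left_cancel₀ hk5 (hR.trans hR₀.symm)
    obtain rfl := mul_left_cancel₀ hu1mu (hS.trans hS₀.symm)
    obtain rfl := mul_left_cancel₀ hmu (hV.trans hV₀.symm)
    exact ⟨rfl, rfl, rfl, rfl, rfl, rfl⟩
  · rintro ⟨rfl, rfl, rfl, rfl, rfl, rfl⟩
    exact ⟨rfl, hQ₀, hH₀, hR₀, hS₀, hV₀⟩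

theorem sveiqhr_disease_free_equilibrium_iff (htheta : theta ≠ 0)
    (hk3 : k3 = kappa + tau + mu) (hk4 : k4 = phi + mu + mu') (hk5 : k5 = mu + alpha)
    (hk6 : k6 = lam / (u1 + mu) + alpha * lam' * kappa / ((u1 + mu) * k3 * k5)
      + alpha * lam' * phi * tau / ((u1 + mu) * k3 * k4 * k5))
    (hk3₀ : k3 ≠ 0) (hk4₀ : k4 ≠ 0) (hk5₀ : k5 ≠ 0) (hu1mu : u1 + mu ≠ 0)
    (hmu : mu ≠ 0) :
    ∀ S V E I Q H R : ℝ, I = 0 →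
      ((lam + alpha * R - (1 - u2) * beta * S * I - u1 * S - mu * S = 0 ∧
      u1 * S - (1 - delta) * beta * V * I - mu * V = 0 ∧
      (1 - u2) * beta * S * I + (1 - delta) * beta * V * I - (theta + u3 + mu) * E = 0 ∧
      theta * E - (gamma + u4 + u5 + mu + mu') * I = 0 ∧
      lam' + u3 * E + u4 * I - (kappa + tau + mu) * Q = 0 ∧
      tau * Q + u5 * I - (phi + mu + mu') * H = 0 ∧
      gamma * I + kappa * Q + phi * H - (alpha + mu) * R = 0) ↔
        (S = k6 ∧ V = u1 * k6 / mu ∧ E = 0 ∧ Q = lam' / k3 ∧ H = tau * lam' / (k3 * k4) ∧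
          R = lam' * (kappa * k4 + phi * tau) / (k3 * k4 * k5))) := by
  rintro S V E I Q H R rfl
  refine Iff.trans ?_ (cascade_iff_closed_form hk3₀ hk4₀ hk5₀ hu1mu hmu hk6)
  subst hk3 hk4 hk5
  constructor
  · rintro ⟨hS, hV, -, hE, hQ, hH, hR⟩
    obtain rfl : E = 0 := by simpa [htheta] using hE
    refine ⟨rfl, ?_, ?_, ?_, ?_, ?_⟩ <;> linarith
  · rintro ⟨rfl, hQ, hH, hR, hS, hV⟩
    refine ⟨?_, ?_, by ring, by ring, ?_, ?_, ?_⟩ <;> linarith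

end DiseaseFree

theorem existsUnique_fin7_of_iff_on_slice {α : Type*} [Zero α]
    {P : α → α → α → α → α → α → α → Prop} {a b c d e f : α}
    (h : ∀ S V E I Q H R, I = 0 →
      (P S V E I Q H R ↔ S = a ∧ V = b ∧ E = c ∧ Q = d ∧ H = e ∧ R = f)) :
    ∃! p : Fin 7 → α, p 3 = 0 ∧ P (p 0) (p 1) (p 2) (p 3) (p 4) (p 5) (p 6) := by
  refine ⟨![a, b, c, 0, d, e, f],
    ⟨rfl, (h _ _ _ _ _ _ _ rfl).2 ⟨rfl, rfl, rfl, rfl, rfl, rfl⟩⟩, ?_⟩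
  rintro p ⟨hp3, hp⟩
  obtain ⟨h0, h1, h2, h4, h5, h6⟩ := (h _ _ _ _ _ _ _ hp3).1 hp
  ext i
  fin_cases i
  exacts [h0, h1, h2, hp3, h4, h5, h6]

theorem stmt5_general
    (lam lam' mu mu' beta alpha theta gamma phi kappa tau : ℝ)
    (delta u1 u2 u3 u4 u5 : ℝ)
    (hlam : 0 < lam) (hlam' : 0 < lam') (hmu : 0 < mu) (hmu' : 0 < mu')
    (halpha : 0 < alpha) (htheta : 0 < theta)
    (hphi : 0 < phi) (hkappa : 0 < kappa) (htau : 0 < tau)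
    (hu1 : u1 ∈ Set.Icc (0:ℝ) 1)
    (k3 k4 k5 k6 : ℝ)
    (hk3 : k3 = kappa + tau + mu) (hk4 : k4 = phi + mu + mu') (hk5 : k5 = mu + alpha)
    (hk6 : k6 = lam / (u1 + mu) + alpha * lam' * kappa / ((u1 + mu) * k3 * k5)
      + alpha * lam' * phi * tau / ((u1 + mu) * k3 * k4 * k5)) :
    (∀ S V E I Q H R : ℝ, I = 0 →
      ((lam + alpha * R - (1 - u2) * beta * S * I - u1 * S - mu * S = 0 ∧
      u1 * S - (1 - delta) * beta * V * I - mu * V = 0 ∧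
      (1 - u2) * beta * S * I + (1 - delta) * beta * V * I - (theta + u3 + mu) * E = 0 ∧
      theta * E - (gamma + u4 + u5 + mu + mu') * I = 0 ∧
      lam' + u3 * E + u4 * I - (kappa + tau + mu) * Q = 0 ∧
      tau * Q + u5 * I - (phi + mu + mu') * H = 0 ∧
      gamma * I + kappa * Q + phi * H - (alpha + mu) * R = 0) ↔
        (S = k6 ∧ V = u1 * k6 / mu ∧ E = 0 ∧ Q = lam' / k3 ∧ H = tau * lam' / (k3 * k4) ∧
          R = lam' * (kappa * k4 + phi * tau) / (k3 * k4 * k5)))) ∧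
    0 < k6 ∧ (0 < u1 → 0 < u1 * k6 / mu) ∧ 0 < lam' / k3 ∧ 0 < tau * lam' / (k3 * k4) ∧
    0 < lam' * (kappa * k4 + phi * tau) / (k3 * k4 * k5) ∧
    (∃! p : Fin 7 → ℝ, p 3 = 0 ∧
      (lam + alpha * (p 6) - (1 - u2) * beta * (p 0) * (p 3) - u1 * (p 0) - mu * (p 0) = 0 ∧
      u1 * (p 0) - (1 - delta) * beta * (p 1) * (p 3) - mu * (p 1) = 0 ∧
      (1 - u2) * beta * (p 0) * (p 3) + (1 - delta) * beta * (p 1) * (p 3) - (theta + u3 + mu) * (p 2) = 0 ∧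
      theta * (p 2) - (gamma + u4 + u5 + mu + mu') * (p 3) = 0 ∧
      lam' + u3 * (p 2) + u4 * (p 3) - (kappa + tau + mu) * (p 4) = 0 ∧
      tau * (p 4) + u5 * (p 3) - (phi + mu + mu') * (p 5) = 0 ∧
      gamma * (p 3) + kappa * (p 4) + phi * (p 5) - (alpha + mu) * (p 6) = 0)) := by
  have hk3₀ : 0 < k3 := hk3 ▸ by positivity
  have hk4₀ : 0 < k4 := hk4 ▸ by positivity
  have hk5₀ : 0 < k5 := hk5 ▸ by positivity
  have hu1₀ : 0 ≤ u1 := hu1.1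
  have hk6₀ : 0 < k6 := hk6 ▸ by positivity
  have equilibrium := sveiqhr_disease_free_equilibrium_iff (beta := beta) (gamma := gamma)
    (delta := delta) (u2 := u2) (u3 := u3) (u4 := u4) (u5 := u5) htheta.ne' hk3 hk4 hk5 hk6
    hk3₀.ne' hk4₀.ne' hk5₀.ne' (by positivity) hmu.ne'
  exact ⟨equilibrium, hk6₀, fun _ => by positivity, by positivity, by positivity, by positivity,
    existsUnique_fin7_of_iff_on_slice equilibrium⟩

theorem stmt5
    (lam lam' mu mu' beta alpha theta gamma phi kappa tau : ℝ)
    (delta u1 u2 u3 u4 u5 : ℝ)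
    (hlam : 0 < lam) (hlam' : 0 < lam') (hmu : 0 < mu) (hmu' : 0 < mu')
    (hbeta : 0 < beta) (halpha : 0 < alpha) (htheta : 0 < theta)
    (hgamma : 0 < gamma) (hphi : 0 < phi) (hkappa : 0 < kappa) (htau : 0 < tau)
    (hdelta : delta ∈ Set.Icc (0:ℝ) 1) (hu1 : u1 ∈ Set.Icc (0:ℝ) 1)
    (hu2 : u2 ∈ Set.Icc (0:ℝ) 1) (hu3 : u3 ∈ Set.Icc (0:ℝ) 1)
    (hu4 : u4 ∈ Set.Icc (0:ℝ) 1) (hu5 : u5 ∈ Set.Icc (0:ℝ) 1)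
    (k1 k2 k3 k4 k5 k6 : ℝ)
    (hk1 : k1 = theta + u3 + mu) (hk2 : k2 = gamma + u4 + u5 + mu + mu')
    (hk3 : k3 = kappa + tau + mu) (hk4 : k4 = phi + mu + mu') (hk5 : k5 = mu + alpha)
    (hk6 : k6 = lam / (u1 + mu) + alpha * lam' * kappa / ((u1 + mu) * k3 * k5)
      + alpha * lam' * phi * tau / ((u1 + mu) * k3 * k4 * k5)) :
    (∀ S V E I Q H R : ℝ, I = 0 →
      ((lam + alpha * R - (1 - u2) * beta * S * I - u1 * S - mu * S = 0 ∧
      u1 * S - (1 - delta) * beta * V * I - mu * V = 0 ∧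
      (1 - u2) * beta * S * I + (1 - delta) * beta * V * I - (theta + u3 + mu) * E = 0 ∧
      theta * E - (gamma + u4 + u5 + mu + mu') * I = 0 ∧
      lam' + u3 * E + u4 * I - (kappa + tau + mu) * Q = 0 ∧
      tau * Q + u5 * I - (phi + mu + mu') * H = 0 ∧
      gamma * I + kappa * Q + phi * H - (alpha + mu) * R = 0) ↔
        (S = k6 ∧ V = u1 * k6 / mu ∧ E = 0 ∧ Q = lam' / k3 ∧ H = tau * lam' / (k3 * k4) ∧
          R = lam' * (kappa * k4 + phi * tau) / (k3 * k4 * k5)))) ∧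
    0 < k6 ∧ (0 < u1 → 0 < u1 * k6 / mu) ∧ 0 < lam' / k3 ∧ 0 < tau * lam' / (k3 * k4) ∧
    0 < lam' * (kappa * k4 + phi * tau) / (k3 * k4 * k5) ∧
    (∃! p : Fin 7 → ℝ, p 3 = 0 ∧
      (lam + alpha * (p 6) - (1 - u2) * beta * (p 0) * (p 3) - u1 * (p 0) - mu * (p 0) = 0 ∧
      u1 * (p 0) - (1 - delta) * beta * (p 1) * (p 3) - mu * (p 1) = 0 ∧
      (1 - u2) * beta * (p 0) * (p 3) + (1 - delta) * beta * (p 1) * (p 3) - (theta + u3 + mu) * (p 2) = 0 ∧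
      theta * (p 2) - (gamma + u4 + u5 + mu + mu') * (p 3) = 0 ∧
      lam' + u3 * (p 2) + u4 * (p 3) - (kappa + tau + mu) * (p 4) = 0 ∧
      tau * (p 4) + u5 * (p 3) - (phi + mu + mu') * (p 5) = 0 ∧
      gamma * (p 3) + kappa * (p 4) + phi * (p 5) - (alpha + mu) * (p 6) = 0)) :=
  stmt5_general lam lam' mu mu' beta alpha theta gamma phi kappa tau delta u1 u2 u3 u4 u5 hlam hlam'
    hmu hmu' halpha htheta hphi hkappa htau hu1 k3 k4 k5 k6 hk3 hk4 hk5 hk6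
end

section
/- Let F be the 4×4 real matrix whose (1,2) entry is (1−u₂)βk₆ + (1−δ)βu₁k₆/μ and whose other entries are 0, and let V be the 4×4 real matrix with rows (k₁,0,0,0), (−θ,k₂,0,0), (−u₃,−u₄,k₃,0), (0,−u₅,−τ,k₄). Then V is invertible, and the characteristic polynomial of F·V⁻¹ is X³·(X − R₀), where R₀ = θβk₆(μ(1−u₂)+(1−δ)u₁)/(k₁k₂μ); in particular, the eigenvalues of F·V⁻¹ are 0 and R₀, so its spectral radius equals R₀ whenever R₀ ≥ 0. -/
/-!
`F` has rank one, `F = c • e₀ e₁ᵀ`, so `F V⁻¹ = c • e₀ wᵀ` with `wᵀ` the second row of `V⁻¹`.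
Since `V` is lower triangular, `w = (θ / (k₁ k₂), 1 / k₂, 0, 0)`, found by solving `wᵀ V = e₁ᵀ`.
A rank-one matrix `u vᵀ` of size `n` has characteristic polynomial `X ^ (n - 1) * (X - u ⬝ᵥ v)`,
and here `u ⬝ᵥ v = c θ / (k₁ k₂) = R₀`.
-/

open Polynomial Matrix

namespace Matrix

variable {n R K : Type*} [Fintype n] [DecidableEq n]

theorem charpoly_vecMulVec_eq_X_pow_mul [CommRing R] [Nonempty n] (u v : n → R) :
    (vecMulVec u v).charpoly = X ^ (Fintype.card n - 1) * (X - C (u ⬝ᵥ v)) := by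
  obtain ⟨m, hm⟩ := Nat.exists_eq_add_one.mpr (Fintype.card_pos (α := n))
  rw [charpoly_vecMulVec, hm, smul_eq_C_mul, Nat.add_sub_cancel]
  ring

theorem spectrum_vecMulVec [Field K] (hn : 2 ≤ Fintype.card n) (u v : n → K) :
    spectrum K (vecMulVec u v) = {0, u ⬝ᵥ v} := by
  have : Nonempty n := Fintype.card_pos_iff.mp (by omega)
  have hpow : Fintype.card n - 1 ≠ 0 := by omega
  ext r
  rw [mem_spectrum_iff_isRoot_charpoly, charpoly_vecMulVec_eq_X_pow_mul]
  simp [sub_eq_zero, hpow]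

theorem isUnit_of_isLowerTriangular [Field K] [LinearOrder n] {M : Matrix n n K}
    (h : M.IsLowerTriangular) (hdiag : ∀ i, M i i ≠ 0) : IsUnit M := by
  rw [isUnit_iff_isUnit_det, det_of_isLowerTriangular M h, isUnit_iff_ne_zero]
  exact Finset.prod_ne_zero_iff.mpr fun i _ => hdiag i

end Matrix

theorem spectralRadius_eq_ofReal_of_spectrum_eq_pair {A : Type*} [Ring A] [Algebra ℝ A] {a : A}
    {r : ℝ} (h : spectrum ℝ a = {0, r}) (hr : 0 ≤ r) : spectralRadius ℝ a = ENNReal.ofReal r := by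
  rw [spectralRadius, h, iSup_insert, iSup_singleton]
  simp [← enorm_eq_nnnorm, Real.enorm_eq_ofReal hr]

section TransitionMatrix

variable {k1 k2 k3 k4 theta u3 u4 u5 tau : ℝ}

theorem isUnit_transitionMatrix (h1 : k1 ≠ 0) (h2 : k2 ≠ 0) (h3 : k3 ≠ 0) (h4 : k4 ≠ 0) :
    IsUnit !![k1, 0, 0, 0; -theta, k2, 0, 0; -u3, -u4, k3, 0; 0, -u5, -tau, k4] := by
  refine isUnit_of_isLowerTriangular (fun i j hij => ?_) fun i => ?_
  · rw [OrderDual.toDual_lt_toDual] at hij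
    fin_cases i <;> fin_cases j <;> simp_all
  · fin_cases i <;> simpa

theorem vecMul_transitionMatrix (h1 : k1 ≠ 0) (h2 : k2 ≠ 0) :
    ![theta / (k1 * k2), 1 / k2, 0, 0] ᵥ*
      !![k1, 0, 0, 0; -theta, k2, 0, 0; -u3, -u4, k3, 0; 0, -u5, -tau, k4] = ![0, 1, 0, 0] := by
  ext j
  fin_cases j <;> simp [vecMul, dotProduct, Fin.sum_univ_succ] <;> field_simp; ring

theorem mul_inv_transitionMatrix (h1 : k1 ≠ 0) (h2 : k2 ≠ 0) (h3 : k3 ≠ 0) (h4 : k4 ≠ 0)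
    (c : ℝ) :
    !![0, c, 0, 0; 0, 0, 0, 0; 0, 0, 0, 0; 0, 0, 0, 0] *
      (!![k1, 0, 0, 0; -theta, k2, 0, 0; -u3, -u4, k3, 0; 0, -u5, -tau, k4])⁻¹ =
      vecMulVec ![c, 0, 0, 0] ![theta / (k1 * k2), 1 / k2, 0, 0] := by
  have hF : !![0, c, 0, 0; 0, 0, 0, 0; 0, 0, 0, 0; 0, 0, 0, 0] =
      vecMulVec ![c, 0, 0, 0] ![theta / (k1 * k2), 1 / k2, 0, 0] *
        !![k1, 0, 0, 0; -theta, k2, 0, 0; -u3, -u4, k3, 0; 0, -u5, -tau, k4] := by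
    rw [vecMulVec_mul, vecMul_transitionMatrix h1 h2]
    ext i j
    fin_cases i <;> fin_cases j <;> simp [vecMulVec_apply]
  rw [hF, mul_nonsing_inv_cancel_right _ _
    ((isUnit_iff_isUnit_det _).mp (isUnit_transitionMatrix h1 h2 h3 h4))]

end TransitionMatrix

theorem stmt6_general
    (mu mu' beta theta gamma phi kappa tau : ℝ)
    (delta u1 u2 u3 u4 u5 : ℝ)
    (hmu : 0 < mu) (hmu' : 0 < mu')
    (htheta : 0 < theta)
    (hgamma : 0 < gamma) (hphi : 0 < phi) (hkappa : 0 < kappa) (htau : 0 < tau)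
    (hu3 : u3 ∈ Set.Icc (0:ℝ) 1)
    (hu4 : u4 ∈ Set.Icc (0:ℝ) 1) (hu5 : u5 ∈ Set.Icc (0:ℝ) 1)
    (k1 k2 k3 k4 k6 : ℝ)
    (hk1 : k1 = theta + u3 + mu) (hk2 : k2 = gamma + u4 + u5 + mu + mu')
    (hk3 : k3 = kappa + tau + mu) (hk4 : k4 = phi + mu + mu')
    (R0 : ℝ) (hR0 : R0 = theta * beta * k6 * (mu * (1 - u2) + (1 - delta) * u1) / (k1 * k2 * mu))
    (Fm Vm : Matrix (Fin 4) (Fin 4) ℝ)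
    (hFm : Fm = !![0, (1 - u2) * beta * k6 + (1 - delta) * beta * u1 * k6 / mu, 0, 0;
                   0, 0, 0, 0; 0, 0, 0, 0; 0, 0, 0, 0])
    (hVm : Vm = !![k1, 0, 0, 0; -theta, k2, 0, 0; -u3, -u4, k3, 0; 0, -u5, -tau, k4]) :
    IsUnit Vm ∧
    Matrix.charpoly (Fm * Vm⁻¹) = Polynomial.X ^ 3 * (Polynomial.X - Polynomial.C R0) ∧
    spectrum ℝ (Fm * Vm⁻¹) = {0, R0} ∧
    (0 ≤ R0 → spectralRadius ℝ (Fm * Vm⁻¹) = ENNReal.ofReal R0) := by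
  have h1 : k1 ≠ 0 := by rw [hk1]; linarith [hu3.1]
  have h2 : k2 ≠ 0 := by rw [hk2]; linarith [hu4.1, hu5.1]
  have h3 : k3 ≠ 0 := by rw [hk3]; linarith
  have h4 : k4 ≠ 0 := by rw [hk4]; linarith
  subst hFm hVm
  rw [mul_inv_transitionMatrix h1 h2 h3 h4]
  have hdot : ![(1 - u2) * beta * k6 + (1 - delta) * beta * u1 * k6 / mu, 0, 0, 0] ⬝ᵥ
      ![theta / (k1 * k2), 1 / k2, 0, 0] = R0 := by
    rw [hR0]
    simp only [dotProduct, one_div, Fin.sum_univ_succ, Fin.isValue, cons_val_zero, cons_val_succ,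
      zero_mul, mul_zero, Finset.univ_unique, Fin.default_eq_zero, cons_val_fin_one,
      Finset.sum_const_zero, add_zero]
    field_simp
  have hspec := hdot ▸ spectrum_vecMulVec (by simp) _ _
  refine ⟨isUnit_transitionMatrix h1 h2 h3 h4, ?_, hspec,
    spectralRadius_eq_ofReal_of_spectrum_eq_pair hspec⟩
  rw [charpoly_vecMulVec_eq_X_pow_mul, hdot]
  simp

theorem stmt6
    (lam lam' mu mu' beta alpha theta gamma phi kappa tau : ℝ)
    (delta u1 u2 u3 u4 u5 : ℝ)
    (hlam : 0 < lam) (hlam' : 0 < lam') (hmu : 0 < mu) (hmu' : 0 < mu')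
    (hbeta : 0 < beta) (halpha : 0 < alpha) (htheta : 0 < theta)
    (hgamma : 0 < gamma) (hphi : 0 < phi) (hkappa : 0 < kappa) (htau : 0 < tau)
    (hdelta : delta ∈ Set.Icc (0:ℝ) 1) (hu1 : u1 ∈ Set.Icc (0:ℝ) 1)
    (hu2 : u2 ∈ Set.Icc (0:ℝ) 1) (hu3 : u3 ∈ Set.Icc (0:ℝ) 1)
    (hu4 : u4 ∈ Set.Icc (0:ℝ) 1) (hu5 : u5 ∈ Set.Icc (0:ℝ) 1)
    (k1 k2 k3 k4 k5 k6 : ℝ)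
    (hk1 : k1 = theta + u3 + mu) (hk2 : k2 = gamma + u4 + u5 + mu + mu')
    (hk3 : k3 = kappa + tau + mu) (hk4 : k4 = phi + mu + mu') (hk5 : k5 = mu + alpha)
    (hk6 : k6 = lam / (u1 + mu) + alpha * lam' * kappa / ((u1 + mu) * k3 * k5)
      + alpha * lam' * phi * tau / ((u1 + mu) * k3 * k4 * k5))
    (R0 : ℝ) (hR0 : R0 = theta * beta * k6 * (mu * (1 - u2) + (1 - delta) * u1) / (k1 * k2 * mu))
    (Fm Vm : Matrix (Fin 4) (Fin 4) ℝ)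
    (hFm : Fm = !![0, (1 - u2) * beta * k6 + (1 - delta) * beta * u1 * k6 / mu, 0, 0;
                   0, 0, 0, 0; 0, 0, 0, 0; 0, 0, 0, 0])
    (hVm : Vm = !![k1, 0, 0, 0; -theta, k2, 0, 0; -u3, -u4, k3, 0; 0, -u5, -tau, k4]) :
    IsUnit Vm ∧
    Matrix.charpoly (Fm * Vm⁻¹) = Polynomial.X ^ 3 * (Polynomial.X - Polynomial.C R0) ∧
    spectrum ℝ (Fm * Vm⁻¹) = {0, R0} ∧
    (0 ≤ R0 → spectralRadius ℝ (Fm * Vm⁻¹) = ENNReal.ofReal R0) :=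
  stmt6_general mu mu' beta theta gamma phi kappa tau delta u1 u2 u3 u4 u5 hmu hmu' htheta hgamma
    hphi hkappa htau hu3 hu4 hu5 k1 k2 k3 k4 k6 hk1 hk2 hk3 hk4 R0 hR0 Fm Vm hFm hVm
end

section
/- Let c = μ² + (γ+θ+u₃+u₄+u₅+μ')μ + ((u₂−1)βk₆+γ+u₄+u₅+μ')θ + u₃(γ+u₄+u₅+μ') + βθk₆u₁(δ−1)/μ and R₀ = θβk₆(μ(1−u₂)+(1−δ)u₁)/(k₁k₂μ). Then c > 0 if and only if R₀ < 1, and c < 0 if and only if R₀ > 1. -/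
open Real Filter Polynomial Matrix

/-! Clearing the denominator `μ` shows `c = k₁k₂ - N` and `R₀ = N / (k₁k₂)` for
`N = θβk₆(μ(1-u₂)+(1-δ)u₁)/μ`, i.e. `c = k₁k₂(1 - R₀)` with `k₁k₂ > 0`. -/

theorem sub_pos_iff_div_lt_one_and_sub_neg_iff_one_lt_div {α : Type*} [Field α] [LinearOrder α]
    [IsStrictOrderedRing α] {K N : α} (hK : 0 < K) :
    (0 < K - N ↔ N / K < 1) ∧ (K - N < 0 ↔ 1 < N / K) :=
  ⟨by rw [sub_pos, div_lt_one hK], by rw [sub_neg, one_lt_div hK]⟩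

theorem threshold_coeff_eq_mul_sub_div
    (mu mu' beta theta gamma delta u1 u2 u3 u4 u5 k6 : ℝ) (hmu : mu ≠ 0) :
    mu ^ 2 + (gamma + theta + u3 + u4 + u5 + mu') * mu
      + ((u2 - 1) * beta * k6 + gamma + u4 + u5 + mu') * theta
      + u3 * (gamma + u4 + u5 + mu') + beta * theta * k6 * u1 * (delta - 1) / mu
    = (theta + u3 + mu) * (gamma + u4 + u5 + mu + mu')
      - theta * beta * k6 * (mu * (1 - u2) + (1 - delta) * u1) / mu := by
  field_simp
  ring

theorem stmt8_general
    (mu mu' beta theta gamma : ℝ)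
    (delta u1 u2 u3 u4 u5 : ℝ)
    (hmu : 0 < mu) (hmu' : 0 < mu')
    (htheta : 0 < theta)
    (hgamma : 0 < gamma)
    (hu3 : u3 ∈ Set.Icc (0:ℝ) 1)
    (hu4 : u4 ∈ Set.Icc (0:ℝ) 1) (hu5 : u5 ∈ Set.Icc (0:ℝ) 1)
    (k1 k2 k6 : ℝ)
    (hk1 : k1 = theta + u3 + mu) (hk2 : k2 = gamma + u4 + u5 + mu + mu')
    (c R0 : ℝ)
    (hc : c = mu ^ 2 + (gamma + theta + u3 + u4 + u5 + mu') * mu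
      + ((u2 - 1) * beta * k6 + gamma + u4 + u5 + mu') * theta
      + u3 * (gamma + u4 + u5 + mu') + beta * theta * k6 * u1 * (delta - 1) / mu)
    (hR0 : R0 = theta * beta * k6 * (mu * (1 - u2) + (1 - delta) * u1) / (k1 * k2 * mu)) :
    (0 < c ↔ R0 < 1) ∧ (c < 0 ↔ 1 < R0) := by
  have hk12 : 0 < k1 * k2 := by
    rw [hk1, hk2]
    have := hu3.1; have := hu4.1; have := hu5.1
    positivity
  rw [threshold_coeff_eq_mul_sub_div mu mu' beta theta gamma delta u1 u2 u3 u4 u5 k6 hmu.ne',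
    ← hk1, ← hk2] at hc
  have hR0' : R0 = theta * beta * k6 * (mu * (1 - u2) + (1 - delta) * u1) / mu / (k1 * k2) := by
    rw [hR0, div_div, mul_comm mu (k1 * k2)]
  rw [hc, hR0']
  exact sub_pos_iff_div_lt_one_and_sub_neg_iff_one_lt_div hk12

theorem stmt8
    (lam lam' mu mu' beta alpha theta gamma phi kappa tau : ℝ)
    (delta u1 u2 u3 u4 u5 : ℝ)
    (hlam : 0 < lam) (hlam' : 0 < lam') (hmu : 0 < mu) (hmu' : 0 < mu')
    (hbeta : 0 < beta) (halpha : 0 < alpha) (htheta : 0 < theta)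
    (hgamma : 0 < gamma) (hphi : 0 < phi) (hkappa : 0 < kappa) (htau : 0 < tau)
    (hdelta : delta ∈ Set.Icc (0:ℝ) 1) (hu1 : u1 ∈ Set.Icc (0:ℝ) 1)
    (hu2 : u2 ∈ Set.Icc (0:ℝ) 1) (hu3 : u3 ∈ Set.Icc (0:ℝ) 1)
    (hu4 : u4 ∈ Set.Icc (0:ℝ) 1) (hu5 : u5 ∈ Set.Icc (0:ℝ) 1)
    (k1 k2 k3 k4 k5 k6 : ℝ)
    (hk1 : k1 = theta + u3 + mu) (hk2 : k2 = gamma + u4 + u5 + mu + mu')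
    (hk3 : k3 = kappa + tau + mu) (hk4 : k4 = phi + mu + mu') (hk5 : k5 = mu + alpha)
    (hk6 : k6 = lam / (u1 + mu) + alpha * lam' * kappa / ((u1 + mu) * k3 * k5)
      + alpha * lam' * phi * tau / ((u1 + mu) * k3 * k4 * k5))
    (c R0 : ℝ)
    (hc : c = mu ^ 2 + (gamma + theta + u3 + u4 + u5 + mu') * mu
      + ((u2 - 1) * beta * k6 + gamma + u4 + u5 + mu') * theta
      + u3 * (gamma + u4 + u5 + mu') + beta * theta * k6 * u1 * (delta - 1) / mu)
    (hR0 : R0 = theta * beta * k6 * (mu * (1 - u2) + (1 - delta) * u1) / (k1 * k2 * mu)) :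
    (0 < c ↔ R0 < 1) ∧ (c < 0 ↔ 1 < R0) :=
  stmt8_general mu mu' beta theta gamma delta u1 u2 u3 u4 u5 hmu hmu' htheta hgamma hu3 hu4 hu5 k1
    k2 k6 hk1 hk2 c R0 hc hR0
end

section
/- Suppose R₀ < 1, where R₀ = θβk₆(μ(1−u₂)+(1−δ)u₁)/(k₁k₂μ). Let b = 2μ+γ+θ+u₃+u₄+u₅+μ' and c = μ² + (γ+θ+u₃+u₄+u₅+μ')μ + ((u₂−1)βk₆+γ+u₄+u₅+μ')θ + u₃(γ+u₄+u₅+μ') + βθk₆u₁(δ−1)/μ. Then every complex root z of the polynomial x² + bx + c satisfies Re z < 0; consequently, every root of the characteristic polynomial (x+μ)(x+u₁+μ)(x+k₃)(x+k₄)(x+k₅)(x²+bx+c) of the Jacobian of the model at the disease-free equilibrium has negative real part. -/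
open Real Filter Polynomial Matrix

set_option maxHeartbeats 1000000

lemma quad_neg_re (b c : ℝ) (hb : 0 < b) (hc : 0 < c) :
    ∀ z : ℂ, z ^ 2 + (b : ℂ) * z + (c : ℂ) = 0 → z.re < 0 := by
  intro z hz
  have hre := congrArg Complex.re hz
  have him := congrArg Complex.im hz
  simp [pow_two, Complex.mul_re, Complex.mul_im, Complex.add_re, Complex.add_im] at hre him
  rcases mul_eq_zero.mp (show z.im * (2 * z.re + b) = 0 by linear_combination him) with h | h
  · by_contra hx
    push_neg at hx
    nlinarith [hre, h, sq_nonneg z.re]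
  · linarith

theorem stmt9
    (lam lam' mu mu' beta alpha theta gamma phi kappa tau : ℝ)
    (delta u1 u2 u3 u4 u5 : ℝ)
    (hlam : 0 < lam) (hlam' : 0 < lam') (hmu : 0 < mu) (hmu' : 0 < mu')
    (hbeta : 0 < beta) (halpha : 0 < alpha) (htheta : 0 < theta)
    (hgamma : 0 < gamma) (hphi : 0 < phi) (hkappa : 0 < kappa) (htau : 0 < tau)
    (hdelta : delta ∈ Set.Icc (0:ℝ) 1) (hu1 : u1 ∈ Set.Icc (0:ℝ) 1)
    (hu2 : u2 ∈ Set.Icc (0:ℝ) 1) (hu3 : u3 ∈ Set.Icc (0:ℝ) 1)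
    (hu4 : u4 ∈ Set.Icc (0:ℝ) 1) (hu5 : u5 ∈ Set.Icc (0:ℝ) 1)
    (k1 k2 k3 k4 k5 k6 : ℝ)
    (hk1 : k1 = theta + u3 + mu) (hk2 : k2 = gamma + u4 + u5 + mu + mu')
    (hk3 : k3 = kappa + tau + mu) (hk4 : k4 = phi + mu + mu') (hk5 : k5 = mu + alpha)
    (hk6 : k6 = lam / (u1 + mu) + alpha * lam' * kappa / ((u1 + mu) * k3 * k5)
      + alpha * lam' * phi * tau / ((u1 + mu) * k3 * k4 * k5))
    (R0 b c : ℝ)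
    (hR0 : R0 = theta * beta * k6 * (mu * (1 - u2) + (1 - delta) * u1) / (k1 * k2 * mu))
    (hR0lt : R0 < 1)
    (hb : b = 2 * mu + gamma + theta + u3 + u4 + u5 + mu')
    (hc : c = mu ^ 2 + (gamma + theta + u3 + u4 + u5 + mu') * mu
      + ((u2 - 1) * beta * k6 + gamma + u4 + u5 + mu') * theta
      + u3 * (gamma + u4 + u5 + mu') + beta * theta * k6 * u1 * (delta - 1) / mu) :
    (∀ z : ℂ, z ^ 2 + (b : ℂ) * z + (c : ℂ) = 0 → z.re < 0) ∧
    (∀ z : ℂ, (z + (mu : ℂ)) * (z + ((u1 + mu : ℝ) : ℂ)) * (z + (k3 : ℂ)) * (z + (k4 : ℂ)) *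
      (z + (k5 : ℂ)) * (z ^ 2 + (b : ℂ) * z + (c : ℂ)) = 0 → z.re < 0) := by
  obtain ⟨hu1l, hu1r⟩ := hu1
  obtain ⟨hu3l, hu3r⟩ := hu3
  obtain ⟨hu4l, hu4r⟩ := hu4
  obtain ⟨hu5l, hu5r⟩ := hu5
  have hk1p : 0 < k1 := by rw [hk1]; linarith
  have hk2p : 0 < k2 := by rw [hk2]; linarith
  have hk3p : 0 < k3 := by rw [hk3]; linarith
  have hk4p : 0 < k4 := by rw [hk4]; linarith
  have hk5p : 0 < k5 := by rw [hk5]; linarith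
  have hum : (0:ℝ) < u1 + mu := by linarith
  have hR0' : R0 * (k1 * k2 * mu) = theta * beta * k6 * (mu * (1 - u2) + (1 - delta) * u1) := by
    rw [hR0]
    field_simp
  have hc' : c * mu = (mu ^ 2 + (gamma + theta + u3 + u4 + u5 + mu') * mu
      + ((u2 - 1) * beta * k6 + gamma + u4 + u5 + mu') * theta
      + u3 * (gamma + u4 + u5 + mu')) * mu + beta * theta * k6 * u1 * (delta - 1) := by
    rw [hc]
    field_simp
  have hkey : c = k1 * k2 * (1 - R0) := by
    have h : c * mu = k1 * k2 * (1 - R0) * mu := by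
      rw [hk1, hk2] at hR0' ⊢
      linear_combination hc' + hR0'
    exact mul_right_cancel₀ hmu.ne' h
  have hcpos : 0 < c := by
    rw [hkey]
    have : 0 < 1 - R0 := by linarith
    positivity
  have hbpos : 0 < b := by rw [hb]; linarith
  have hquad := quad_neg_re b c hbpos hcpos
  refine ⟨hquad, ?_⟩
  intro z hz
  have := mul_eq_zero.mp hz
  rcases this with h | h
  · rcases mul_eq_zero.mp h with h | h
    · rcases mul_eq_zero.mp h with h | h
      · rcases mul_eq_zero.mp h with h | h
        · rcases mul_eq_zero.mp h with h | h
          · have := congrArg Complex.re h; simp at this; linarith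
          · have := congrArg Complex.re h; simp at this; linarith
        · have := congrArg Complex.re h; simp at this; linarith
      · have := congrArg Complex.re h; simp at this; linarith
    · have := congrArg Complex.re h; simp at this; linarith
  · exact hquad z h
end

section
/- Suppose R₀ > 1, where R₀ = θβk₆(μ(1−u₂)+(1−δ)u₁)/(k₁k₂μ). Let b = 2μ+γ+θ+u₃+u₄+u₅+μ' and c = μ² + (γ+θ+u₃+u₄+u₅+μ')μ + ((u₂−1)βk₆+γ+u₄+u₅+μ')θ + u₃(γ+u₄+u₅+μ') + βθk₆u₁(δ−1)/μ. Then the polynomial x² + bx + c has two real roots, one positive and one negative; in particular, the characteristic polynomial of the Jacobian of the model at the disease-free equilibrium has a positive real root. -/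
open Real Filter Polynomial Matrix

theorem stmt10
    (lam lam' mu mu' beta alpha theta gamma phi kappa tau : ℝ)
    (delta u1 u2 u3 u4 u5 : ℝ)
    (hlam : 0 < lam) (hlam' : 0 < lam') (hmu : 0 < mu) (hmu' : 0 < mu')
    (hbeta : 0 < beta) (halpha : 0 < alpha) (htheta : 0 < theta)
    (hgamma : 0 < gamma) (hphi : 0 < phi) (hkappa : 0 < kappa) (htau : 0 < tau)
    (hdelta : delta ∈ Set.Icc (0:ℝ) 1) (hu1 : u1 ∈ Set.Icc (0:ℝ) 1)
    (hu2 : u2 ∈ Set.Icc (0:ℝ) 1) (hu3 : u3 ∈ Set.Icc (0:ℝ) 1)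
    (hu4 : u4 ∈ Set.Icc (0:ℝ) 1) (hu5 : u5 ∈ Set.Icc (0:ℝ) 1)
    (k1 k2 k3 k4 k5 k6 : ℝ)
    (hk1 : k1 = theta + u3 + mu) (hk2 : k2 = gamma + u4 + u5 + mu + mu')
    (hk3 : k3 = kappa + tau + mu) (hk4 : k4 = phi + mu + mu') (hk5 : k5 = mu + alpha)
    (hk6 : k6 = lam / (u1 + mu) + alpha * lam' * kappa / ((u1 + mu) * k3 * k5)
      + alpha * lam' * phi * tau / ((u1 + mu) * k3 * k4 * k5))
    (R0 b c : ℝ)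
    (hR0 : R0 = theta * beta * k6 * (mu * (1 - u2) + (1 - delta) * u1) / (k1 * k2 * mu))
    (hR0gt : 1 < R0)
    (hb : b = 2 * mu + gamma + theta + u3 + u4 + u5 + mu')
    (hc : c = mu ^ 2 + (gamma + theta + u3 + u4 + u5 + mu') * mu
      + ((u2 - 1) * beta * k6 + gamma + u4 + u5 + mu') * theta
      + u3 * (gamma + u4 + u5 + mu') + beta * theta * k6 * u1 * (delta - 1) / mu) :
    (∃ x y : ℝ, 0 < x ∧ y < 0 ∧ x ^ 2 + b * x + c = 0 ∧ y ^ 2 + b * y + c = 0 ∧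
      (∀ z : ℝ, z ^ 2 + b * z + c = 0 → z = x ∨ z = y)) ∧
    (∃ x : ℝ, 0 < x ∧
      (x + mu) * (x + (u1 + mu)) * (x + k3) * (x + k4) * (x + k5) *
        (x ^ 2 + b * x + c) = 0) := by
  obtain ⟨hu10, hu11⟩ := hu1
  obtain ⟨hu30, _⟩ := hu3
  obtain ⟨hu40, _⟩ := hu4
  obtain ⟨hu50, _⟩ := hu5
  have hk1pos : 0 < k1 := by rw [hk1]; linarith
  have hk2pos : 0 < k2 := by rw [hk2]; linarith
  have hbpos : 0 < b := by rw [hb]; linarith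
  have hA : k1 * k2 * mu < theta * beta * k6 * (mu * (1 - u2) + (1 - delta) * u1) := by
    rw [hR0, lt_div_iff₀ (by positivity)] at hR0gt
    linarith
  have hcmu : c * mu = k1 * k2 * mu - theta * beta * k6 * (mu * (1 - u2) + (1 - delta) * u1) := by
    rw [hc, hk1, hk2]
    field_simp
    ring
  have hcneg : c < 0 := by
    have h1 : c * mu < 0 := by rw [hcmu]; linarith
    rcases lt_or_ge c 0 with h | h
    · exact h
    · have := mul_nonneg h hmu.le
      linarith
  have hD : 0 < b ^ 2 - 4 * c := by
    have := sq_nonneg b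
    linarith
  set s := Real.sqrt (b ^ 2 - 4 * c) with hs
  have hs2 : s ^ 2 = b ^ 2 - 4 * c := Real.sq_sqrt hD.le
  have hsnn : 0 ≤ s := Real.sqrt_nonneg _
  have hsb : b < s := by nlinarith
  refine ⟨⟨(s - b) / 2, -(b + s) / 2, by linarith, by linarith,
    by linear_combination hs2 / 4, by linear_combination hs2 / 4, ?_⟩,
    ⟨(s - b) / 2, by linarith, ?_⟩⟩
  · intro z hz
    have h : (z - (s - b) / 2) * (z - (-(b + s) / 2)) = 0 := by
      linear_combination hz - hs2 / 4
    rcases mul_eq_zero.mp h with h | h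
    · left; linarith
    · right; linarith
  · have hq : ((s - b) / 2) ^ 2 + b * ((s - b) / 2) + c = 0 := by
      linear_combination hs2 / 4
    rw [hq, mul_zero]
end

section
/- Suppose δ < 1 and let (S,V,E,I,Q,H,R) be an equilibrium of the SVEIQHR model with I > 0 and V > 0. If βθ(β(1−δ)(1−u₂)I + (1−δ)u₁ + (1−u₂)μ) ≠ 0, then S = k₁k₂(μ + β(1−δ)I) / (βθ(β(1−δ)(1−u₂)I + (1−δ)u₁ + (1−u₂)μ)). -/
open Real Filter Polynomial Matrix

theorem stmt11
    (lam lam' mu mu' beta alpha theta gamma phi kappa tau : ℝ)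
    (delta u1 u2 u3 u4 u5 : ℝ)
    (hlam : 0 < lam) (hlam' : 0 < lam') (hmu : 0 < mu) (hmu' : 0 < mu')
    (hbeta : 0 < beta) (halpha : 0 < alpha) (htheta : 0 < theta)
    (hgamma : 0 < gamma) (hphi : 0 < phi) (hkappa : 0 < kappa) (htau : 0 < tau)
    (hdelta : delta ∈ Set.Icc (0:ℝ) 1) (hu1 : u1 ∈ Set.Icc (0:ℝ) 1)
    (hu2 : u2 ∈ Set.Icc (0:ℝ) 1) (hu3 : u3 ∈ Set.Icc (0:ℝ) 1)
    (hu4 : u4 ∈ Set.Icc (0:ℝ) 1) (hu5 : u5 ∈ Set.Icc (0:ℝ) 1)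
    (k1 k2 k3 k4 k5 : ℝ)
    (hk1 : k1 = theta + u3 + mu) (hk2 : k2 = gamma + u4 + u5 + mu + mu')
    (hk3 : k3 = kappa + tau + mu) (hk4 : k4 = phi + mu + mu') (hk5 : k5 = mu + alpha)
    (hdlt : delta < 1)
    (S V E I Q H R : ℝ) (hIpos : 0 < I) (hVpos : 0 < V)
    (heq : lam + alpha * R - (1 - u2) * beta * S * I - u1 * S - mu * S = 0 ∧
      u1 * S - (1 - delta) * beta * V * I - mu * V = 0 ∧
      (1 - u2) * beta * S * I + (1 - delta) * beta * V * I - (theta + u3 + mu) * E = 0 ∧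
      theta * E - (gamma + u4 + u5 + mu + mu') * I = 0 ∧
      lam' + u3 * E + u4 * I - (kappa + tau + mu) * Q = 0 ∧
      tau * Q + u5 * I - (phi + mu + mu') * H = 0 ∧
      gamma * I + kappa * Q + phi * H - (alpha + mu) * R = 0)
    (hden : beta * theta * (beta * (1 - delta) * (1 - u2) * I + (1 - delta) * u1 + (1 - u2) * mu) ≠ 0) :
    S = k1 * k2 * (mu + beta * (1 - delta) * I) /
      (beta * theta * (beta * (1 - delta) * (1 - u2) * I + (1 - delta) * u1 + (1 - u2) * mu)) := by
  obtain ⟨e1, e2, e3, e4, e5, e6, e7⟩ := heq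
  have hI : I ≠ 0 := ne_of_gt hIpos
  rw [eq_div_iff hden]
  apply mul_right_cancel₀ hI
  subst hk1 hk2
  linear_combination (theta * (mu + beta * (1 - delta) * I)) * e3 +
    beta * theta * (1 - delta) * I * e2 +
    ((theta + u3 + mu) * (mu + beta * (1 - delta) * I)) * e4
end

section
/- Suppose δ < 1 and u₂ < 1. Let d = (1−δ)θ(1−u₂)β²·((((γk₃+κu₄)k₄ + φ(k₃u₅+τu₄))θ + u₃k₂(k₄κ+τφ))α − k₁k₂k₃k₄k₅) and f = θ·(((1−u₂)μ + u₁(1−δ))·((ακλ' + k₃k₅λ)k₄ + αφλ'τ)·βθ − k₁k₂k₃k₄k₅·μ·(μ+u₁)). Then d < 0, and R₀ > 1 if and only if f·d < 0, where R₀ = θβk₆(μ(1−u₂)+(1−δ)u₁)/(k₁k₂μ). -/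
/-!
Every term of the bracket in `d` is dominated by a term of `k₁k₂k₃k₄`: expanding
`k₂k₃k₄ = (γ + u₄ + u₅ + μ + μ')k₃k₄` and using `κk₄ + φτ ≤ k₃k₄`, `φ ≤ k₄` bounds the bracket by
`(θ + u₃)k₂k₃k₄ < k₁k₂k₃k₄`, and `α ≤ k₅`; hence `d < 0`. Clearing the denominators of `k₆`
(multiplying by `(u₁ + μ)k₃k₄k₅ > 0`) turns `k₁k₂μ < θβk₆(μ(1 - u₂) + (1 - δ)u₁)`, i.e. `R₀ > 1`,
into `f > 0`, which is `f d < 0` because `d < 0`.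
-/

lemma mul_add_mul_le_add_add_mul {a b c d e : ℝ} (hbc : b ≤ c) (hd : 0 ≤ d) (hec : 0 ≤ e * c) :
    a * c + b * d ≤ (a + d + e) * c := by
  linarith [mul_le_mul_of_nonneg_right hbc hd]

section ReproductionNumber

variable {lam lam' mu mu' beta alpha theta gamma phi kappa tau delta u1 u2 u3 u4 u5 : ℝ}
  {k1 k2 k3 k4 k5 k6 : ℝ}

lemma bracket_lt_k1_mul_k2_mul_k3_mul_k4 (hmu : 0 < mu) (hmu' : 0 < mu') (htheta : 0 < theta)
    (hgamma : 0 < gamma) (hphi : 0 < phi) (hkappa : 0 < kappa) (htau : 0 < tau)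
    (hu3 : 0 ≤ u3) (hu4 : 0 ≤ u4) (hu5 : 0 ≤ u5)
    (hk1 : k1 = theta + u3 + mu) (hk2 : k2 = gamma + u4 + u5 + mu + mu')
    (hk3 : k3 = kappa + tau + mu) (hk4 : k4 = phi + mu + mu') :
    ((gamma * k3 + kappa * u4) * k4 + phi * (k3 * u5 + tau * u4)) * theta
      + u3 * k2 * (k4 * kappa + tau * phi) < k1 * k2 * k3 * k4 := by
  have hk2_pos : 0 < k2 := by rw [hk2]; positivity
  have hk3_pos : 0 < k3 := by rw [hk3]; positivity
  have hk4_pos : 0 < k4 := by rw [hk4]; positivity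
  have hphi_le : phi ≤ k4 := by rw [hk4]; linarith
  have hflow : kappa * k4 + phi * tau ≤ k3 * k4 := by
    rw [hk3]; exact mul_add_mul_le_add_add_mul hphi_le htau.le (by positivity)
  have hexits : (gamma * k3 + kappa * u4) * k4 + phi * (k3 * u5 + tau * u4) ≤ k2 * k3 * k4 := by
    have hu4_term := mul_le_mul_of_nonneg_left hflow hu4
    have hu5_term := mul_le_mul_of_nonneg_left (mul_le_mul_of_nonneg_left hphi_le hk3_pos.le) hu5
    have hmu_term : 0 ≤ (mu + mu') * (k3 * k4) := by positivity
    rw [hk2]; linarith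
  have hentry : k4 * kappa + tau * phi ≤ k3 * k4 := by linarith
  have hmu_term : 0 < mu * (k2 * k3 * k4) := by positivity
  rw [hk1]
  linarith [mul_le_mul_of_nonneg_right hexits htheta.le,
    mul_le_mul_of_nonneg_left hentry (mul_nonneg hu3 hk2_pos.le)]

lemma threshold_numerator_neg (hmu : 0 < mu) (hmu' : 0 < mu') (hbeta : 0 < beta)
    (halpha : 0 < alpha) (htheta : 0 < theta) (hgamma : 0 < gamma) (hphi : 0 < phi)
    (hkappa : 0 < kappa) (htau : 0 < tau) (hu3 : 0 ≤ u3) (hu4 : 0 ≤ u4) (hu5 : 0 ≤ u5)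
    (hk1 : k1 = theta + u3 + mu) (hk2 : k2 = gamma + u4 + u5 + mu + mu')
    (hk3 : k3 = kappa + tau + mu) (hk4 : k4 = phi + mu + mu') (hk5 : k5 = mu + alpha)
    (hdlt : delta < 1) (hu2lt : u2 < 1) :
    (1 - delta) * theta * (1 - u2) * beta ^ 2 *
      ((((gamma * k3 + kappa * u4) * k4 + phi * (k3 * u5 + tau * u4)) * theta
        + u3 * k2 * (k4 * kappa + tau * phi)) * alpha - k1 * k2 * k3 * k4 * k5) < 0 := by
  have hbracket := bracket_lt_k1_mul_k2_mul_k3_mul_k4 hmu hmu' htheta hgamma hphi hkappa htau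
    hu3 hu4 hu5 hk1 hk2 hk3 hk4
  have hk1234 : 0 ≤ k1 * k2 * k3 * k4 := by subst hk1 hk2 hk3 hk4; positivity
  have halpha_le : alpha ≤ k5 := by rw [hk5]; linarith
  have hprefactor : 0 < (1 - delta) * theta * (1 - u2) * beta ^ 2 := by
    have : 0 < 1 - delta := sub_pos.2 hdlt
    have : 0 < 1 - u2 := sub_pos.2 hu2lt
    positivity
  refine mul_neg_of_pos_of_neg hprefactor (sub_neg.2 ?_)
  exact mul_lt_mul_of_lt_of_le_of_pos_of_nonneg hbracket halpha_le halpha hk1234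

lemma one_lt_R0_iff_pos (hmu : 0 < mu) (htheta : 0 < theta) (hu1 : 0 ≤ u1)
    (hk1 : 0 < k1) (hk2 : 0 < k2) (hk3 : 0 < k3) (hk4 : 0 < k4) (hk5 : 0 < k5)
    (hk6 : k6 = lam / (u1 + mu) + alpha * lam' * kappa / ((u1 + mu) * k3 * k5)
      + alpha * lam' * phi * tau / ((u1 + mu) * k3 * k4 * k5)) :
    1 < theta * beta * k6 * (mu * (1 - u2) + (1 - delta) * u1) / (k1 * k2 * mu) ↔
      0 < theta * (((1 - u2) * mu + u1 * (1 - delta)) *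
        ((alpha * kappa * lam' + k3 * k5 * lam) * k4 + alpha * phi * lam' * tau) * beta * theta
        - k1 * k2 * k3 * k4 * k5 * mu * (mu + u1)) := by
  have hu1mu : 0 < u1 + mu := by positivity
  have hk6_cleared : k6 * ((u1 + mu) * k3 * k4 * k5)
      = lam * k3 * k4 * k5 + alpha * lam' * kappa * k4 + alpha * lam' * phi * tau := by
    rw [hk6]; field_simp
  rw [one_lt_div (by positivity), mul_pos_iff_of_pos_left htheta, sub_pos,
    ← mul_lt_mul_iff_of_pos_right (by positivity : 0 < (u1 + mu) * k3 * k4 * k5)]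
  have hgain : theta * beta * k6 * (mu * (1 - u2) + (1 - delta) * u1) *
        ((u1 + mu) * k3 * k4 * k5)
      = ((1 - u2) * mu + u1 * (1 - delta)) *
        ((alpha * kappa * lam' + k3 * k5 * lam) * k4 + alpha * phi * lam' * tau) * beta * theta :=
    by linear_combination theta * beta * (mu * (1 - u2) + (1 - delta) * u1) * hk6_cleared
  have hloss : k1 * k2 * mu * ((u1 + mu) * k3 * k4 * k5)
      = k1 * k2 * k3 * k4 * k5 * mu * (mu + u1) := by ring
  rw [hgain, hloss]

end ReproductionNumber

theorem stmt13_general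
    (lam lam' mu mu' beta alpha theta gamma phi kappa tau : ℝ)
    (delta u1 u2 u3 u4 u5 : ℝ)
    (hmu : 0 < mu) (hmu' : 0 < mu')
    (hbeta : 0 < beta) (halpha : 0 < alpha) (htheta : 0 < theta)
    (hgamma : 0 < gamma) (hphi : 0 < phi) (hkappa : 0 < kappa) (htau : 0 < tau)
    (hu1 : u1 ∈ Set.Icc (0:ℝ) 1)
    (hu3 : u3 ∈ Set.Icc (0:ℝ) 1)
    (hu4 : u4 ∈ Set.Icc (0:ℝ) 1) (hu5 : u5 ∈ Set.Icc (0:ℝ) 1)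
    (k1 k2 k3 k4 k5 k6 : ℝ)
    (hk1 : k1 = theta + u3 + mu) (hk2 : k2 = gamma + u4 + u5 + mu + mu')
    (hk3 : k3 = kappa + tau + mu) (hk4 : k4 = phi + mu + mu') (hk5 : k5 = mu + alpha)
    (hk6 : k6 = lam / (u1 + mu) + alpha * lam' * kappa / ((u1 + mu) * k3 * k5)
      + alpha * lam' * phi * tau / ((u1 + mu) * k3 * k4 * k5))
    (hdlt : delta < 1) (hu2lt : u2 < 1)
    (d f R0 : ℝ)
    (hd : d = (1 - delta) * theta * (1 - u2) * beta ^ 2 *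
      ((((gamma * k3 + kappa * u4) * k4 + phi * (k3 * u5 + tau * u4)) * theta
        + u3 * k2 * (k4 * kappa + tau * phi)) * alpha - k1 * k2 * k3 * k4 * k5))
    (hf : f = theta * (((1 - u2) * mu + u1 * (1 - delta)) *
      ((alpha * kappa * lam' + k3 * k5 * lam) * k4 + alpha * phi * lam' * tau) * beta * theta
      - k1 * k2 * k3 * k4 * k5 * mu * (mu + u1)))
    (hR0 : R0 = theta * beta * k6 * (mu * (1 - u2) + (1 - delta) * u1) / (k1 * k2 * mu)) :
    d < 0 ∧ (1 < R0 ↔ f * d < 0) := by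
  have hd_neg : d < 0 := hd ▸ threshold_numerator_neg hmu hmu' hbeta halpha htheta hgamma hphi
    hkappa htau hu3.1 hu4.1 hu5.1 hk1 hk2 hk3 hk4 hk5 hdlt hu2lt
  have hR0_iff : 1 < R0 ↔ 0 < f := by
    rw [hR0, hf]
    refine one_lt_R0_iff_pos hmu htheta hu1.1 ?_ ?_ ?_ ?_ ?_ hk6
    · rw [hk1]; linarith [hu3.1]
    · rw [hk2]; linarith [hu4.1, hu5.1]
    · rw [hk3]; positivity
    · rw [hk4]; positivity
    · rw [hk5]; positivity
  exact ⟨hd_neg, hR0_iff.trans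
    ⟨fun hf_pos => mul_neg_of_pos_of_neg hf_pos hd_neg, fun h => pos_of_mul_neg_left h hd_neg.le⟩⟩

theorem stmt13
    (lam lam' mu mu' beta alpha theta gamma phi kappa tau : ℝ)
    (delta u1 u2 u3 u4 u5 : ℝ)
    (hlam : 0 < lam) (hlam' : 0 < lam') (hmu : 0 < mu) (hmu' : 0 < mu')
    (hbeta : 0 < beta) (halpha : 0 < alpha) (htheta : 0 < theta)
    (hgamma : 0 < gamma) (hphi : 0 < phi) (hkappa : 0 < kappa) (htau : 0 < tau)
    (hdelta : delta ∈ Set.Icc (0:ℝ) 1) (hu1 : u1 ∈ Set.Icc (0:ℝ) 1)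
    (hu2 : u2 ∈ Set.Icc (0:ℝ) 1) (hu3 : u3 ∈ Set.Icc (0:ℝ) 1)
    (hu4 : u4 ∈ Set.Icc (0:ℝ) 1) (hu5 : u5 ∈ Set.Icc (0:ℝ) 1)
    (k1 k2 k3 k4 k5 k6 : ℝ)
    (hk1 : k1 = theta + u3 + mu) (hk2 : k2 = gamma + u4 + u5 + mu + mu')
    (hk3 : k3 = kappa + tau + mu) (hk4 : k4 = phi + mu + mu') (hk5 : k5 = mu + alpha)
    (hk6 : k6 = lam / (u1 + mu) + alpha * lam' * kappa / ((u1 + mu) * k3 * k5)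
      + alpha * lam' * phi * tau / ((u1 + mu) * k3 * k4 * k5))
    (hdlt : delta < 1) (hu2lt : u2 < 1)
    (d f R0 : ℝ)
    (hd : d = (1 - delta) * theta * (1 - u2) * beta ^ 2 *
      ((((gamma * k3 + kappa * u4) * k4 + phi * (k3 * u5 + tau * u4)) * theta
        + u3 * k2 * (k4 * kappa + tau * phi)) * alpha - k1 * k2 * k3 * k4 * k5))
    (hf : f = theta * (((1 - u2) * mu + u1 * (1 - delta)) *
      ((alpha * kappa * lam' + k3 * k5 * lam) * k4 + alpha * phi * lam' * tau) * beta * theta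
      - k1 * k2 * k3 * k4 * k5 * mu * (mu + u1)))
    (hR0 : R0 = theta * beta * k6 * (mu * (1 - u2) + (1 - delta) * u1) / (k1 * k2 * mu)) :
    d < 0 ∧ (1 < R0 ↔ f * d < 0) :=
  stmt13_general lam lam' mu mu' beta alpha theta gamma phi kappa tau delta u1 u2 u3 u4 u5 hmu hmu'
    hbeta halpha htheta hgamma hphi hkappa htau hu1 hu3 hu4 hu5 k1 k2 k3 k4 k5 k6 hk1 hk2 hk3 hk4
    hk5 hk6 hdlt hu2lt d f R0 hd hf hR0
end

section
/- Let D₁ = αβδk₄κθλ' + αβδτθφλ' + βδk₃k₄k₅λθ − αβk₄κθλ' − αβτθφλ' − βk₃k₄k₅λθ + k₁k₂k₃k₄k₅μ and ℓ₂ = ((κθβαλ' + k₃k₅(βλθ − k₁k₂μ))k₄ + αβτθφλ')/(((ακλ' + k₃k₅λ)k₄ + φλ'τα)βθ). Then D₁ = 0 if and only if δ = ℓ₂. Moreover, if D₁ ≠ 0 and ℓ₁ := μ(αβk₄κθλ' + αβτθφλ' + βk₃k₄k₅λθ − k₁k₂k₃k₄k₅μ)/D₁ satisfies ℓ₁ ≠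 −μ, then R₀ evaluated at u₁ = ℓ₁ and u₂ = 0 equals 1, where R₀ = θβk₆(μ(1−u₂)+(1−δ)u₁)/(k₁k₂μ). -/
/-!
Put `E := θβ(αλ'(k₄κ + τφ) + k₃k₄k₅λ)` and `K := k₁k₂k₃k₄k₅μ`, both positive. Then
`D₁ = E(δ - 1) + K` and `ℓ₂ = (E - K)/E`, which gives the first claim. Clearing the denominators
of `k₆` gives `θβk₆ = E/((u₁ + μ)k₃k₄k₅)`, so at `u₂ = 0` the reproduction number is the Möbius
function `R₀ = E(μ + (1 - δ)u₁)/(K(u₁ + μ))` of `u₁`. The equation `R₀ = 1` is linear in `u₁`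
with leading coefficient `-D₁`, and its root is `ℓ₁ = μ(E - K)/D₁`.
-/

theorem add_mul_sub_one_eq_zero_iff {F : Type*} [Field F] {e k d : F} (he : e ≠ 0) :
    e * (d - 1) + k = 0 ↔ d = (e - k) / e := by
  rw [eq_div_iff he]
  constructor <;> intro h <;> linear_combination h

theorem mul_add_div_mul_add_eq_one {F : Type*} [Field F] {e k d m l : F}
    (hD : e * (d - 1) + k ≠ 0) (hk : k ≠ 0) (hlm : l + m ≠ 0)
    (hl : l = m * (e - k) / (e * (d - 1) + k)) :
    e * (m + (1 - d) * l) / (k * (l + m)) = 1 := by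
  have hroot : l * (e * (d - 1) + k) = m * (e - k) := by rw [hl, div_mul_cancel₀ _ hD]
  rw [div_eq_one_iff_eq (mul_ne_zero hk hlm)]
  linear_combination -hroot

theorem stmt19_general
    (lam lam' mu mu' beta alpha theta gamma phi kappa tau : ℝ)
    (delta u3 u4 u5 : ℝ)
    (hlam : 0 < lam) (hlam' : 0 < lam') (hmu : 0 < mu) (hmu' : 0 < mu')
    (hbeta : 0 < beta) (halpha : 0 < alpha) (htheta : 0 < theta)
    (hgamma : 0 < gamma) (hphi : 0 < phi) (hkappa : 0 < kappa) (htau : 0 < tau)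
    (hu3 : u3 ∈ Set.Icc (0:ℝ) 1) (hu4 : u4 ∈ Set.Icc (0:ℝ) 1)
    (hu5 : u5 ∈ Set.Icc (0:ℝ) 1)
    (k1 k2 k3 k4 k5 : ℝ)
    (hk1 : k1 = theta + u3 + mu) (hk2 : k2 = gamma + u4 + u5 + mu + mu')
    (hk3 : k3 = kappa + tau + mu) (hk4 : k4 = phi + mu + mu') (hk5 : k5 = mu + alpha)
    (R0 : ℝ → ℝ → ℝ → ℝ)
    (hR0 : ∀ d v w : ℝ, R0 d v w =
      theta * beta * (lam / (v + mu) + alpha * lam' * kappa / ((v + mu) * k3 * k5)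
        + alpha * lam' * phi * tau / ((v + mu) * k3 * k4 * k5))
      * (mu * (1 - w) + (1 - d) * v) / (k1 * k2 * mu))
    (l2 : ℝ)
    (hl2 : l2 = ((kappa * theta * beta * alpha * lam' + k3 * k5 * (beta * lam * theta - k1 * k2 * mu)) * k4
      + alpha * beta * tau * theta * phi * lam')
      / (((alpha * kappa * lam' + k3 * k5 * lam) * k4 + phi * lam' * tau * alpha) * beta * theta))
    (D1 : ℝ)
    (hD1 : D1 = alpha * beta * delta * k4 * kappa * theta * lam'
      + alpha * beta * delta * tau * theta * phi * lam' + beta * delta * k3 * k4 * k5 * lam * theta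
      - alpha * beta * k4 * kappa * theta * lam' - alpha * beta * tau * theta * phi * lam'
      - beta * k3 * k4 * k5 * lam * theta + k1 * k2 * k3 * k4 * k5 * mu)
    (l1 : ℝ)
    (hl1 : l1 = mu * (alpha * beta * k4 * kappa * theta * lam' + alpha * beta * tau * theta * phi * lam'
      + beta * k3 * k4 * k5 * lam * theta - k1 * k2 * k3 * k4 * k5 * mu) / D1) :
    (D1 = 0 ↔ delta = l2) ∧
    (D1 ≠ 0 → l1 ≠ -mu → R0 delta l1 0 = 1) := by
  have hk1p : 0 < k1 := by rw [hk1]; linarith [hu3.1]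
  have hk2p : 0 < k2 := by rw [hk2]; linarith [hu4.1, hu5.1]
  have hk3p : 0 < k3 := by rw [hk3]; positivity
  have hk4p : 0 < k4 := by rw [hk4]; positivity
  have hk5p : 0 < k5 := by rw [hk5]; positivity
  set E := theta * beta * (alpha * lam' * (k4 * kappa + tau * phi) + k3 * k4 * k5 * lam) with hE
  set K := k1 * k2 * k3 * k4 * k5 * mu with hK
  have hEp : 0 < E := by positivity
  have hKp : 0 < K := by positivity
  have hD1E : D1 = E * (delta - 1) + K := by rw [hD1]; ring
  have hl2E : l2 = (E - K) / E := by
    rw [hl2, div_eq_div_iff (by positivity) hEp.ne']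
    ring
  refine ⟨by rw [hD1E, hl2E]; exact add_mul_sub_one_eq_zero_iff hEp.ne', fun hD1ne hl1ne => ?_⟩
  have hl1mu : l1 + mu ≠ 0 := fun h => hl1ne (eq_neg_of_add_eq_zero_left h)
  have hl1E : l1 = mu * (E - K) / (E * (delta - 1) + K) := by rw [hl1, ← hD1E]; ring
  have hR0E : R0 delta l1 0 = E * (mu + (1 - delta) * l1) / (K * (l1 + mu)) := by
    rw [hR0]
    field_simp
    ring
  rw [hR0E]
  exact mul_add_div_mul_add_eq_one (hD1E ▸ hD1ne) hKp.ne' hl1mu hl1E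

theorem stmt19
    (lam lam' mu mu' beta alpha theta gamma phi kappa tau : ℝ)
    (delta u1 u2 u3 u4 u5 : ℝ)
    (hlam : 0 < lam) (hlam' : 0 < lam') (hmu : 0 < mu) (hmu' : 0 < mu')
    (hbeta : 0 < beta) (halpha : 0 < alpha) (htheta : 0 < theta)
    (hgamma : 0 < gamma) (hphi : 0 < phi) (hkappa : 0 < kappa) (htau : 0 < tau)
    (hu3 : u3 ∈ Set.Icc (0:ℝ) 1) (hu4 : u4 ∈ Set.Icc (0:ℝ) 1)
    (hu5 : u5 ∈ Set.Icc (0:ℝ) 1)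
    (k1 k2 k3 k4 k5 : ℝ)
    (hk1 : k1 = theta + u3 + mu) (hk2 : k2 = gamma + u4 + u5 + mu + mu')
    (hk3 : k3 = kappa + tau + mu) (hk4 : k4 = phi + mu + mu') (hk5 : k5 = mu + alpha)
    (R0 : ℝ → ℝ → ℝ → ℝ)
    (hR0 : ∀ d v w : ℝ, R0 d v w =
      theta * beta * (lam / (v + mu) + alpha * lam' * kappa / ((v + mu) * k3 * k5)
        + alpha * lam' * phi * tau / ((v + mu) * k3 * k4 * k5))
      * (mu * (1 - w) + (1 - d) * v) / (k1 * k2 * mu))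
    (l2 : ℝ)
    (hl2 : l2 = ((kappa * theta * beta * alpha * lam' + k3 * k5 * (beta * lam * theta - k1 * k2 * mu)) * k4
      + alpha * beta * tau * theta * phi * lam')
      / (((alpha * kappa * lam' + k3 * k5 * lam) * k4 + phi * lam' * tau * alpha) * beta * theta))
    (D1 : ℝ)
    (hD1 : D1 = alpha * beta * delta * k4 * kappa * theta * lam'
      + alpha * beta * delta * tau * theta * phi * lam' + beta * delta * k3 * k4 * k5 * lam * theta
      - alpha * beta * k4 * kappa * theta * lam' - alpha * beta * tau * theta * phi * lam'
      - beta * k3 * k4 * k5 * lam * theta + k1 * k2 * k3 * k4 * k5 * mu)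
    (l1 : ℝ)
    (hl1 : l1 = mu * (alpha * beta * k4 * kappa * theta * lam' + alpha * beta * tau * theta * phi * lam'
      + beta * k3 * k4 * k5 * lam * theta - k1 * k2 * k3 * k4 * k5 * mu) / D1) :
    (D1 = 0 ↔ delta = l2) ∧
    (D1 ≠ 0 → l1 ≠ -mu → R0 delta l1 0 = 1) :=
  stmt19_general lam lam' mu mu' beta alpha theta gamma phi kappa tau delta u3 u4 u5 hlam hlam' hmu
    hmu' hbeta halpha htheta hgamma hphi hkappa htau hu3 hu4 hu5 k1 k2 k3 k4 k5 hk1 hk2 hk3 hk4 hk5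
    R0 hR0 l2 hl2 D1 hD1 l1 hl1
end
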